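/- arXiv:2201.07144 — 5 statements merged into one kernel-verified Lean document; each statement's English description precedes it below -/
import Mathlib

section
/- In the extended affine braid group ABr_n (generated by σ_0,...,σ_{n-1} and ω with relations σ_iσ_{i+1}σ_i = σ_{i+1}σ_iσ_{i+1}, σ_iσ_j = σ_jσ_i for |i-j|>1 with indices mod n, and ωσ_iω^{-1} = σ_{i+1}), the elements y_i := σ_{i-1}^{-1}⋯σ_1^{-1}ω σ_{n-1}⋯σ_i for i = 1,...,n pairwise commute. -/
/-- The decreasing product `f (b-1) * f (b-2) * ⋯ * f a` (empty if `b ≤ a`). -/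
def descProd {G : Type*} [Group G] (f : ℕ → G) (a b : ℕ) : G :=
  ((List.range (b - a)).reverse.map fun k => f (a + k)).prod

/-- The element `y i = σ_{i-1}⁻¹ ⋯ σ_1⁻¹ * ω * σ_{n-1} ⋯ σ_i` of the extended affine
braid group. -/
def yElt {G : Type*} [Group G] (n : ℕ) (σ : ZMod n → G) (ω : G) (i : ℕ) : G :=
  descProd (fun k => (σ (k : ZMod n))⁻¹) 1 i * ω * descProd (fun k => σ (k : ZMod n)) i n

section helpers
variable {G : Type*} [Group G]

lemma dp_empty (f : ℕ → G) (a b : ℕ) (h : b ≤ a) : descProd f a b = 1 := by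
  simp [descProd, Nat.sub_eq_zero_of_le h]

lemma dp_peel_left (f : ℕ → G) (a b : ℕ) (h : a < b) :
    descProd f a b = f (b - 1) * descProd f a (b - 1) := by
  unfold descProd
  obtain ⟨m, rfl⟩ : ∃ m, b = a + m + 1 := ⟨b - a - 1, by omega⟩
  have h1 : a + m + 1 - a = m + 1 := by omega
  have h2 : a + m + 1 - 1 - a = m := by omega
  have h3 : a + m + 1 - 1 = a + m := by omega
  rw [h1, h2, h3, List.range_succ]
  simp

lemma dp_peel_right (f : ℕ → G) (a b : ℕ) (h : a < b) :
    descProd f a b = descProd f (a + 1) b * f a := by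
  unfold descProd
  obtain ⟨m, rfl⟩ : ∃ m, b = a + m + 1 := ⟨b - a - 1, by omega⟩
  have h1 : a + m + 1 - a = m + 1 := by omega
  have h2 : a + m + 1 - (a + 1) = m := by omega
  rw [h1, h2, List.range_succ_eq_map]
  rw [List.reverse_cons, List.map_append, List.prod_append]
  simp only [List.map_cons, List.map_nil, List.prod_cons, List.prod_nil, mul_one, add_zero]
  congr 1
  rw [List.map_reverse, List.map_map, ← List.map_reverse]
  congr 1
  apply List.map_congr_left
  intro k _
  simp only [Function.comp_apply]
  congr 1
  omega

lemma dp_split (f : ℕ → G) (a m b : ℕ) (h1 : a ≤ m) (h2 : m ≤ b) :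
    descProd f a b = descProd f m b * descProd f a m := by
  induction m, h1 using Nat.le_induction with
  | base => rw [dp_empty f a a le_rfl, mul_one]
  | succ m hm ih =>
    rw [dp_peel_left f a (m+1) (by omega), Nat.add_sub_cancel, ← mul_assoc,
      ← dp_peel_right f m b h2, ih (by omega)]

lemma dp_commute (f : ℕ → G) (a b : ℕ) (g : G)
    (h : ∀ k, a ≤ k → k < b → Commute g (f k)) : Commute g (descProd f a b) := by
  apply Commute.list_prod_right
  intro x hx
  simp only [List.mem_map, List.mem_reverse, List.mem_range] at hx
  obtain ⟨k, hk, rfl⟩ := hx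
  exact h (a + k) (by omega) (by omega)

lemma dp_congr (f g : ℕ → G) (a b : ℕ) (h : ∀ k, a ≤ k → k < b → f k = g k) :
    descProd f a b = descProd g a b := by
  unfold descProd
  congr 1
  apply List.map_congr_left
  intro k hk
  simp only [List.mem_reverse, List.mem_range] at hk
  exact h (a + k) (by omega) (by omega)

lemma dp_conj (f : ℕ → G) (a b : ℕ) (u : G) :
    u * descProd f a b * u⁻¹ = descProd (fun k => u * f k * u⁻¹) a b := by
  unfold descProd
  rw [show u * (((List.range (b-a)).reverse.map fun k => f (a+k)).prod) * u⁻¹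
      = (MulAut.conj u) (((List.range (b-a)).reverse.map fun k => f (a+k)).prod) from rfl,
    map_list_prod, List.map_map]
  rfl

lemma dp_shift (f : ℕ → G) (a b : ℕ) :
    descProd f (a + 1) (b + 1) = descProd (fun k => f (k + 1)) a b := by
  unfold descProd
  rw [Nat.succ_sub_succ]
  congr 1
  apply List.map_congr_left
  intro k _
  congr 1
  omega

end helpers

section structural
variable {G : Type*} [Group G]

/-- Insertion lemma: `τ c` moves through the descending product, becoming `τ (c+1)`. -/
lemma dp_insert (τ : ℕ → G) (a b c : ℕ)
    (hbr : ∀ k, a ≤ k → k + 2 ≤ b → τ k * τ (k+1) * τ k = τ (k+1) * τ k * τ (k+1))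
    (hfr : ∀ k l, a ≤ k → k + 2 ≤ l → l < b → Commute (τ k) (τ l))
    (hac : a ≤ c) (hcb : c + 2 ≤ b) :
    τ c * descProd τ a b = descProd τ a b * τ (c + 1) := by
  have e1 : c + 2 - 1 = c + 1 := rfl
  have e2 : c + 1 - 1 = c := rfl
  have hsplit : descProd τ a b = descProd τ (c+2) b * (τ (c+1) * (τ c * descProd τ a c)) := by
    rw [dp_split τ a (c+2) b (by omega) (by omega),
      dp_peel_left τ a (c+2) (by omega), e1, dp_peel_left τ a (c+1) (by omega), e2]
  have h1 : Commute (τ c) (descProd τ (c+2) b) :=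
    dp_commute _ _ _ _ (fun k hk hk' => hfr c k hac hk hk')
  have h2 : Commute (τ (c+1)) (descProd τ a c) :=
    dp_commute _ _ _ _ (fun k hk hk' => (hfr k (c+1) hk (by omega) (by omega)).symm)
  calc τ c * descProd τ a b
      = (τ c * descProd τ (c+2) b) * (τ (c+1) * τ c) * descProd τ a c := by
        rw [hsplit]; group
    _ = (descProd τ (c+2) b * τ c) * (τ (c+1) * τ c) * descProd τ a c := by rw [h1.eq]
    _ = descProd τ (c+2) b * (τ c * τ (c+1) * τ c) * descProd τ a c := by group
    _ = descProd τ (c+2) b * (τ (c+1) * τ c * τ (c+1)) * descProd τ a c := by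
        rw [hbr c hac hcb]
    _ = descProd τ (c+2) b * (τ (c+1) * τ c) * (τ (c+1) * descProd τ a c) := by group
    _ = descProd τ (c+2) b * (τ (c+1) * τ c) * (descProd τ a c * τ (c+1)) := by rw [h2.eq]
    _ = descProd τ (c+2) b * (τ (c+1) * (τ c * descProd τ a c)) * τ (c+1) := by group
    _ = descProd τ a b * τ (c+1) := by rw [← hsplit]

/-- The V-shaped conjugation lemma:
`τ c ⋅ (τ_{c-1}⋯τ_a)(τ_c⋯τ_{a+1}) = (τ_{c-1}⋯τ_a)(τ_c⋯τ_{a+1}) ⋅ τ a`. -/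
lemma dp_V (τ : ℕ → G) (a c : ℕ)
    (hbr : ∀ k, a ≤ k → k + 1 ≤ c → τ k * τ (k+1) * τ k = τ (k+1) * τ k * τ (k+1))
    (hfr : ∀ k l, a ≤ k → k + 2 ≤ l → l ≤ c → Commute (τ k) (τ l))
    (hac : a ≤ c) :
    τ c * (descProd τ a c * descProd τ (a+1) (c+1)) =
      (descProd τ a c * descProd τ (a+1) (c+1)) * τ a := by
  obtain ⟨d, rfl⟩ : ∃ d, c = a + d := ⟨c - a, by omega⟩
  clear hac
  induction d with
  | zero =>
    simp only [Nat.add_zero]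
    rw [dp_empty τ a a le_rfl, dp_empty τ (a+1) (a+1) le_rfl]
    group
  | succ d ih =>
    have hbr' : ∀ k, a ≤ k → k + 1 ≤ a + d →
        τ k * τ (k+1) * τ k = τ (k+1) * τ k * τ (k+1) :=
      fun k h h' => hbr k h (by omega)
    have hfr' : ∀ k l, a ≤ k → k + 2 ≤ l → l ≤ a + d → Commute (τ k) (τ l) :=
      fun k l h h' h'' => hfr k l h h' (by omega)
    have ih' := ih hbr' hfr'
    set c := a + d + 1 with hc
    have hpl1 : descProd τ a c = τ (a + d) * descProd τ a (a + d) := by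
      rw [dp_peel_left τ a c (by omega)]; congr 1
    have hpl2 : descProd τ (a+1) (c+1) = τ c * descProd τ (a+1) c := by
      rw [dp_peel_left τ (a+1) (c+1) (by omega)]; simp
    have hcomm : Commute (τ c) (descProd τ a (a + d)) :=
      dp_commute _ _ _ _ (fun k hk hk' =>
        (hfr k c hk (by omega) (by omega)).symm)
    calc τ c * (descProd τ a c * descProd τ (a+1) (c+1))
        = τ c * τ (a+d) * (descProd τ a (a+d) * τ c) * descProd τ (a+1) c := by
          rw [hpl1, hpl2]; group
      _ = τ c * τ (a+d) * (τ c * descProd τ a (a+d)) * descProd τ (a+1) c := by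
          rw [← hcomm.eq]
      _ = (τ c * τ (a+d) * τ c) * (descProd τ a (a+d) * descProd τ (a+1) c) := by group
      _ = (τ (a+d) * τ c * τ (a+d)) * (descProd τ a (a+d) * descProd τ (a+1) c) := by
          have := hbr (a+d) (by omega) (by omega)
          rw [show a + d + 1 = c from rfl] at this
          rw [← this]
      _ = τ (a+d) * τ c * (τ (a+d) * (descProd τ a (a+d) * descProd τ (a+1) (a+d+1))) := by
          rw [show a + d + 1 = c from rfl]; group
      _ = τ (a+d) * τ c * (descProd τ a (a+d) * descProd τ (a+1) (a+d+1) * τ a) := by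
          rw [ih']
      _ = τ (a+d) * (τ c * descProd τ a (a+d)) * descProd τ (a+1) c * τ a := by
          rw [show a + d + 1 = c from rfl]; group
      _ = τ (a+d) * (descProd τ a (a+d) * τ c) * descProd τ (a+1) c * τ a := by
          rw [hcomm.eq]
      _ = (descProd τ a c * descProd τ (a+1) (c+1)) * τ a := by
          rw [hpl1, hpl2]; group

end structural

section mainsec
variable {G : Type*} [Group G]

private lemma conj_swap {x y A : G} (h : x * A = A * y) : x⁻¹ * A = A * y⁻¹ := by
  calc x⁻¹ * A = x⁻¹ * (A * y) * y⁻¹ := by group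
    _ = x⁻¹ * (x * A) * y⁻¹ := by rw [h]
    _ = A * y⁻¹ := by group

variable {n : ℕ} {σ : ZMod n → G} {ω : G}

private lemma castNe (a b : ℕ) (ha : a < n) (hb : b < n) (hab : a ≠ b) :
    (a : ZMod n) ≠ (b : ZMod n) := by
  haveI : NeZero n := ⟨by omega⟩
  intro h
  apply hab
  have := congrArg ZMod.val h
  rwa [ZMod.val_cast_of_lt ha, ZMod.val_cast_of_lt hb] at this

private lemma farN
    (hfar : ∀ i j : ZMod n, i ≠ j → i ≠ j + 1 → j ≠ i + 1 → σ i * σ j = σ j * σ i)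
    (k l : ℕ) (h1 : 1 ≤ k) (h2 : k + 2 ≤ l) (h3 : l ≤ n - 1) :
    Commute (σ (k : ZMod n)) (σ (l : ZMod n)) := by
  have hn : 4 ≤ n := by omega
  have e1 : ((l : ZMod n) + 1) = ((l + 1 : ℕ) : ZMod n) := by push_cast; ring
  have e2 : ((k : ZMod n) + 1) = ((k + 1 : ℕ) : ZMod n) := by push_cast; ring
  apply hfar
  · exact castNe k l (by omega) (by omega) (by omega)
  · rw [e1]
    rcases eq_or_lt_of_le (show l + 1 ≤ n by omega) with h | h
    · have h0 : ((l + 1 : ℕ) : ZMod n) = ((0 : ℕ) : ZMod n) := by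
        rw [h]; simp
      rw [h0]
      exact castNe k 0 (by omega) (by omega) (by omega)
    · exact castNe k (l+1) (by omega) h (by omega)
  · rw [e2]
    exact castNe l (k+1) (by omega) (by omega) (by omega)

private lemma braidN
    (hbraid : ∀ i : ZMod n, σ i * σ (i + 1) * σ i = σ (i + 1) * σ i * σ (i + 1))
    (k : ℕ) :
    σ (k : ZMod n) * σ ((k+1 : ℕ) : ZMod n) * σ (k : ZMod n)
      = σ ((k+1 : ℕ) : ZMod n) * σ (k : ZMod n) * σ ((k+1 : ℕ) : ZMod n) := by
  push_cast
  exact hbraid k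

private lemma ωconjN (hω : ∀ i : ZMod n, ω * σ i * ω⁻¹ = σ (i + 1)) (k : ℕ) :
    ω * σ (k : ZMod n) * ω⁻¹ = σ ((k + 1 : ℕ) : ZMod n) := by
  push_cast
  exact hω k

private lemma dp_conj_shift (f : ℕ → G) (u : G) (hu : ∀ k, u * f k * u⁻¹ = f (k+1))
    (a b : ℕ) : u * descProd f a b = descProd f (a+1) (b+1) * u := by
  have h1 : descProd f (a+1) (b+1) = descProd (fun k => u * f k * u⁻¹) a b := by
    rw [dp_shift]
    exact dp_congr _ _ _ _ (fun k _ _ => (hu k).symm)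
  rw [h1, ← dp_conj]
  group

end mainsec

section mainsec2
variable {G : Type*} [Group G] {n : ℕ} {σ : ZMod n → G} {ω : G}

private lemma yRec (i : ℕ) (h1 : 1 ≤ i) (h2 : i < n) :
    yElt n σ ω (i+1) = (σ (i : ZMod n))⁻¹ * yElt n σ ω i * (σ (i : ZMod n))⁻¹ := by
  unfold yElt
  rw [dp_peel_left (fun k => (σ (k : ZMod n))⁻¹) 1 (i+1) (by omega), Nat.add_sub_cancel,
    dp_peel_right (fun k => σ (k : ZMod n)) i n h2]
  group

private lemma yComm
    (hbraid : ∀ i : ZMod n, σ i * σ (i + 1) * σ i = σ (i + 1) * σ i * σ (i + 1))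
    (hfar : ∀ i j : ZMod n, i ≠ j → i ≠ j + 1 → j ≠ i + 1 → σ i * σ j = σ j * σ i)
    (hω : ∀ i : ZMod n, ω * σ i * ω⁻¹ = σ (i + 1))
    (i j : ℕ) (h1 : 1 ≤ i) (h2 : i + 1 ≤ j) (h3 : j ≤ n - 1) :
    Commute (σ (j : ZMod n)) (yElt n σ ω i) := by
  have hn : 3 ≤ n := by omega
  set Q := descProd (fun k => (σ (k : ZMod n))⁻¹) 1 i with hQdef
  set P := descProd (fun k => σ (k : ZMod n)) i n with hPdef
  have hQ : Commute (σ (j : ZMod n)) Q :=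
    dp_commute _ _ _ _ (fun k hk hk' =>
      ((farN hfar k j (by omega) (by omega) h3).symm).inv_right)
  have hωj : σ (j : ZMod n) * ω = ω * σ ((j-1 : ℕ) : ZMod n) := by
    have h := ωconjN hω (j-1)
    rw [show j - 1 + 1 = j by omega] at h
    rw [← h]; group
  have hins : σ ((j-1 : ℕ) : ZMod n) * P = P * σ (j : ZMod n) := by
    have h := dp_insert (fun k => σ (k : ZMod n)) i n (j-1)
      (fun k _ _ => braidN hbraid k)
      (fun k l hk hk' hl => farN hfar k l (by omega) hk' (by omega))
      (by omega) (by omega)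
    rwa [show j - 1 + 1 = j by omega] at h
  show σ (j : ZMod n) * yElt n σ ω i = yElt n σ ω i * σ (j : ZMod n)
  unfold yElt
  rw [← hQdef, ← hPdef]
  calc σ (j : ZMod n) * (Q * ω * P)
      = (σ (j : ZMod n) * Q) * ω * P := by group
    _ = (Q * σ (j : ZMod n)) * ω * P := by rw [hQ.eq]
    _ = Q * (σ (j : ZMod n) * ω) * P := by group
    _ = Q * (ω * σ ((j-1 : ℕ) : ZMod n)) * P := by rw [hωj]
    _ = Q * ω * (σ ((j-1 : ℕ) : ZMod n) * P) := by group
    _ = Q * ω * (P * σ (j : ZMod n)) := by rw [hins]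
    _ = Q * ω * P * σ (j : ZMod n) := by group

private lemma yBase
    (hbraid : ∀ i : ZMod n, σ i * σ (i + 1) * σ i = σ (i + 1) * σ i * σ (i + 1))
    (hfar : ∀ i j : ZMod n, i ≠ j → i ≠ j + 1 → j ≠ i + 1 → σ i * σ j = σ j * σ i)
    (hω : ∀ i : ZMod n, ω * σ i * ω⁻¹ = σ (i + 1))
    (i : ℕ) (h1 : 1 ≤ i) (h2 : i + 1 ≤ n) :
    Commute (yElt n σ ω i) (yElt n σ ω (i+1)) := by
  have hn : 2 ≤ n := by omega
  have en : n - 1 + 1 = n := by omega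
  set x := σ (i : ZMod n) with hxdef
  set T1 := σ ((1 : ℕ) : ZMod n) with hT1def
  set Tn1 := σ ((n - 1 : ℕ) : ZMod n) with hTn1def
  set Q1 := descProd (fun k => (σ (k : ZMod n))⁻¹) 1 i with hQ1def
  set Q2 := descProd (fun k => (σ (k : ZMod n))⁻¹) 2 (i+1) with hQ2def
  set P1 := descProd (fun k => σ (k : ZMod n)) (i+1) n with hP1def
  set P0 := descProd (fun k => σ (k : ZMod n)) i (n-1) with hP0def
  -- basic commutation of P1 with Q1
  have hPQ : P1 * Q1 = Q1 * P1 := by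
    refine (dp_commute _ _ _ _ (fun k hk hk' => ?_)).eq
    exact ((dp_commute (fun k => σ (k : ZMod n)) (i+1) n (σ (k : ZMod n))
      (fun l hl hl' => farN hfar k l (by omega) (by omega) (by omega))).symm).inv_right
  -- shifts
  have hQs : ω * Q1 = Q2 * ω := by
    rw [hQ1def, hQ2def]
    exact dp_conj_shift _ ω (fun k => by
      have h := ωconjN hω k
      rw [← h]; group) 1 i
  have hPs : P1 * ω = ω * P0 := by
    rw [hP1def, hP0def]
    have h := dp_conj_shift (fun k => σ (k : ZMod n)) ω (fun k => ωconjN hω k) i (n-1)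
    rw [en] at h
    exact h.symm
  -- the V-lemma on the inverse side
  have hIinv : x⁻¹ * (Q1 * Q2) = (Q1 * Q2) * T1⁻¹ := by
    have h := dp_V (fun k => (σ (k : ZMod n))⁻¹) 1 i
      (fun k _ _ => by
        have hb := braidN hbraid k
        simp only [← mul_inv_rev]
        congr 1
        rw [← mul_assoc, hb, mul_assoc])
      (fun k l hk hk' hl =>
        ((farN hfar k l hk hk' (by omega)).inv_left).inv_right)
      h1
    exact h
  have hI : x * (Q1 * Q2) = (Q1 * Q2) * T1 := by
    have h := conj_swap hIinv
    simpa using h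
  -- the V-lemma on the positive side
  have hII : Tn1 * (P0 * P1) = (P0 * P1) * x := by
    have h := dp_V (fun k => σ (k : ZMod n)) i (n-1)
      (fun k _ _ => braidN hbraid k)
      (fun k l hk hk' hl => farN hfar k l (by omega) hk' hl)
      (by omega)
    rw [en] at h
    exact h
  -- ω² conjugation
  have hω2 : T1 * (ω * ω) = (ω * ω) * Tn1 := by
    have a1 : ω * Tn1 * ω⁻¹ = σ ((n : ℕ) : ZMod n) := by
      have h := ωconjN hω (n-1)
      rwa [en] at h
    have a2 : ω * σ ((n : ℕ) : ZMod n) * ω⁻¹ = σ ((n+1 : ℕ) : ZMod n) := ωconjN hω n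
    have a3 : σ ((n+1 : ℕ) : ZMod n) = T1 := by
      rw [hT1def]
      congr 1
      push_cast
      simp [ZMod.natCast_self]
    calc T1 * (ω * ω) = (ω * (ω * Tn1 * ω⁻¹) * ω⁻¹) * (ω * ω) := by
          rw [a1, a2, a3]
      _ = (ω * ω) * Tn1 := by group
  -- expressions for the two y's
  have eY : yElt n σ ω i = Q1 * ω * (P1 * x) := by
    unfold yElt
    rw [← hQ1def, dp_peel_right (fun k => σ (k : ZMod n)) i n (by omega), ← hP1def, ← hxdef]
  have eY' : yElt n σ ω (i+1) = (x⁻¹ * Q1) * ω * P1 := by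
    unfold yElt
    rw [dp_peel_left (fun k => (σ (k : ZMod n))⁻¹) 1 (i+1) (by omega), Nat.add_sub_cancel,
      ← hQ1def, ← hP1def, ← hxdef]
  -- the key commutation
  have key : x * (Q1 * Q2 * ((ω * ω) * (P0 * P1)))
      = (Q1 * Q2 * ((ω * ω) * (P0 * P1))) * x := by
    calc x * (Q1 * Q2 * ((ω * ω) * (P0 * P1)))
        = (x * (Q1 * Q2)) * ((ω * ω) * (P0 * P1)) := by group
      _ = ((Q1 * Q2) * T1) * ((ω * ω) * (P0 * P1)) := by rw [hI]
      _ = (Q1 * Q2) * (T1 * (ω * ω)) * (P0 * P1) := by group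
      _ = (Q1 * Q2) * ((ω * ω) * Tn1) * (P0 * P1) := by rw [hω2]
      _ = (Q1 * Q2) * (ω * ω) * (Tn1 * (P0 * P1)) := by group
      _ = (Q1 * Q2) * (ω * ω) * ((P0 * P1) * x) := by rw [hII]
      _ = (Q1 * Q2 * ((ω * ω) * (P0 * P1))) * x := by group
  show yElt n σ ω i * yElt n σ ω (i+1) = yElt n σ ω (i+1) * yElt n σ ω i
  rw [eY, eY']
  calc (Q1 * ω * (P1 * x)) * ((x⁻¹ * Q1) * ω * P1)
      = Q1 * ω * (P1 * Q1) * (ω * P1) := by group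
    _ = Q1 * ω * (Q1 * P1) * (ω * P1) := by rw [hPQ]
    _ = Q1 * (ω * Q1) * ((P1 * ω) * P1) := by group
    _ = Q1 * (Q2 * ω) * ((ω * P0) * P1) := by rw [hQs, hPs]
    _ = x⁻¹ * (x * (Q1 * Q2 * ((ω * ω) * (P0 * P1)))) := by group
    _ = x⁻¹ * ((Q1 * Q2 * ((ω * ω) * (P0 * P1))) * x) := by rw [key]
    _ = x⁻¹ * (Q1 * (Q2 * ω) * ((ω * P0) * P1)) * x := by group
    _ = x⁻¹ * (Q1 * (ω * Q1) * ((P1 * ω) * P1)) * x := by rw [← hQs, ← hPs]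
    _ = x⁻¹ * (Q1 * ω * (Q1 * P1) * (ω * P1)) * x := by group
    _ = x⁻¹ * (Q1 * ω * (P1 * Q1) * (ω * P1)) * x := by rw [← hPQ]
    _ = ((x⁻¹ * Q1) * ω * P1) * (Q1 * ω * (P1 * x)) := by group

end mainsec2

/-- In the extended affine braid group `ABr_n`, the elements
`y_i = σ_{i-1}⁻¹⋯σ_1⁻¹ ω σ_{n-1}⋯σ_i`, `1 ≤ i ≤ n`, pairwise commute. -/
theorem stmt0 {G : Type*} [Group G] (n : ℕ) (σ : ZMod n → G) (ω : G)
    (hbraid : ∀ i : ZMod n, σ i * σ (i + 1) * σ i = σ (i + 1) * σ i * σ (i + 1))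
    (hfar : ∀ i j : ZMod n, i ≠ j → i ≠ j + 1 → j ≠ i + 1 → σ i * σ j = σ j * σ i)
    (hω : ∀ i : ZMod n, ω * σ i * ω⁻¹ = σ (i + 1)) :
    ∀ i j : ℕ, 1 ≤ i → i ≤ n → 1 ≤ j → j ≤ n →
      Commute (yElt n σ ω i) (yElt n σ ω j) := by
  intro i j h1i hin h1j hjn
  have main : ∀ a b : ℕ, 1 ≤ a → a + 1 ≤ b → b ≤ n →
      Commute (yElt n σ ω a) (yElt n σ ω b) := by
    intro a b h1a hab
    induction b, hab using Nat.le_induction with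
    | base =>
      intro hbn
      exact yBase hbraid hfar hω a h1a hbn
    | succ b hb ih =>
      intro hbn
      rw [yRec b (by omega) (by omega)]
      have hc : Commute (yElt n σ ω a) (σ (b : ZMod n)) :=
        (yComm hbraid hfar hω a b h1a hb (by omega)).symm
      exact (hc.inv_right.mul_right (ih (by omega))).mul_right hc.inv_right
  rcases lt_trichotomy i j with h | h | h
  · exact main i j h1i h hjn
  · subst h; exact Commute.refl _
  · exact (main j i h1j h hin).symm
end

section
/- In the extended affine braid group ABr_n, for every k with 1 ≤ k ≤ n, the product y_1 y_2 ⋯ y_k equals (ω σ_{n-1} σ_{n-2} ⋯ σ_k)^k. Consequently, if d_1 ≥ d_2 ≥ ⋯ ≥ d_n ≥ 0, then y_1^{d_1}⋯y_n^{d_n} = (y_1⋯y_n)^{d_n} ∏_{k=1}^{n-1}(y_1⋯y_k)^{d_k - d_{k+1}} is a product of the positive elements (ωσ_{n-1}⋯σ_k)^k, i.e., a positive braid lift of an affine permutation. -/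
/-- The positive braid `ω * σ_{n-1} * ⋯ * σ_k`. -/
def posPiece {G : Type*} [Group G] (n : ℕ) (σ : ZMod n → G) (ω : G) (k : ℕ) : G :=
  ω * descProd (fun j => σ (j : ZMod n)) k n

namespace Stmt2Aux

def yy {G : Type*} [Group G] (n : ℕ) (s : ℕ → G) (ω : G) (i : ℕ) : G :=
  descProd (fun j => (s j)⁻¹) 1 i * ω * descProd s i n


variable {G : Type*} [Group G]

def ascProd (f : ℕ → G) (a b : ℕ) : G :=
  ((List.range (b - a)).map fun k => f (a + k)).prod

theorem descProd_of_le (f : ℕ → G) {a b : ℕ} (h : b ≤ a) : descProd f a b = 1 := by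
  unfold descProd
  rw [Nat.sub_eq_zero_of_le h]
  simp

theorem ascProd_of_le (f : ℕ → G) {a b : ℕ} (h : b ≤ a) : ascProd f a b = 1 := by
  unfold ascProd
  rw [Nat.sub_eq_zero_of_le h]
  simp

theorem descProd_succ_top (f : ℕ → G) {a b : ℕ} (h : a ≤ b) :
    descProd f a (b + 1) = f b * descProd f a b := by
  unfold descProd
  rw [show b + 1 - a = (b - a) + 1 by omega, List.range_succ]
  simp [show a + (b - a) = b by omega]

theorem ascProd_succ_top (f : ℕ → G) {a b : ℕ} (h : a ≤ b) :
    ascProd f a (b + 1) = ascProd f a b * f b := by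
  unfold ascProd
  rw [show b + 1 - a = (b - a) + 1 by omega, List.range_succ]
  simp [show a + (b - a) = b by omega]

theorem descProd_one (f : ℕ → G) (a : ℕ) : descProd f a (a + 1) = f a := by
  rw [descProd_succ_top f (le_refl a), descProd_of_le f (le_refl a), mul_one]

theorem ascProd_one (f : ℕ → G) (a : ℕ) : ascProd f a (a + 1) = f a := by
  rw [ascProd_succ_top f (le_refl a), ascProd_of_le f (le_refl a), one_mul]

theorem descProd_split (f : ℕ → G) {a b : ℕ} (hab : a ≤ b) :
    ∀ {c : ℕ}, b ≤ c → descProd f a c = descProd f b c * descProd f a b := by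
  intro c hbc
  induction c, hbc using Nat.le_induction with
  | base => rw [descProd_of_le f (le_refl b), one_mul]
  | succ c hc ih =>
      rw [descProd_succ_top f (le_trans hab hc), descProd_succ_top f hc, ih, mul_assoc]

theorem ascProd_split (f : ℕ → G) {a b : ℕ} (hab : a ≤ b) :
    ∀ {c : ℕ}, b ≤ c → ascProd f a c = ascProd f a b * ascProd f b c := by
  intro c hbc
  induction c, hbc using Nat.le_induction with
  | base => rw [ascProd_of_le f (le_refl b), mul_one]
  | succ c hc ih =>
      rw [ascProd_succ_top f (le_trans hab hc), ascProd_succ_top f hc, ih, mul_assoc]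

theorem descProd_succ_bot (f : ℕ → G) {a b : ℕ} (h : a < b) :
    descProd f a b = descProd f (a + 1) b * f a := by
  rw [descProd_split f (show a ≤ a + 1 by omega) h, descProd_one]

theorem ascProd_succ_bot (f : ℕ → G) {a b : ℕ} (h : a < b) :
    ascProd f a b = f a * ascProd f (a + 1) b := by
  rw [ascProd_split f (show a ≤ a + 1 by omega) h, ascProd_one]

theorem commute_descProd {x : G} {f : ℕ → G} {a b : ℕ}
    (h : ∀ j, a ≤ j → j < b → Commute x (f j)) : Commute x (descProd f a b) := by
  unfold descProd
  apply Commute.list_prod_right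
  intro y hy
  simp only [List.mem_map, List.mem_reverse, List.mem_range] at hy
  obtain ⟨k, hk, rfl⟩ := hy
  exact h (a + k) (by omega) (by omega)

theorem mul_descProd_shift (w : G) (f : ℕ → G) (hc : ∀ j, w * f j = f (j + 1) * w)
    (a : ℕ) : ∀ b : ℕ, w * descProd f a b = descProd f (a + 1) (b + 1) * w := by
  intro b
  induction b with
  | zero =>
      rw [descProd_of_le f (Nat.zero_le a), descProd_of_le f (by omega)]
      simp
  | succ c ih =>
      rcases le_or_gt (c + 1) a with hca | hca
      · rw [descProd_of_le f hca, descProd_of_le f (by omega)]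
        simp
      · have hac : a ≤ c := by omega
        rw [descProd_succ_top f hac, descProd_succ_top f (show a + 1 ≤ c + 1 by omega)]
        calc w * (f c * descProd f a c) = (w * f c) * descProd f a c := by rw [mul_assoc]
          _ = f (c + 1) * (w * descProd f a c) := by rw [hc c, mul_assoc]
          _ = f (c + 1) * (descProd f (a + 1) (c + 1) * w) := by rw [ih]
          _ = f (c + 1) * descProd f (a + 1) (c + 1) * w := by rw [mul_assoc]

theorem inv_descProd (f : ℕ → G) (a : ℕ) : ∀ b : ℕ,
    descProd (fun j => (f j)⁻¹) a b = (ascProd f a b)⁻¹ := by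
  intro b
  induction b with
  | zero =>
      rw [descProd_of_le _ (Nat.zero_le a), ascProd_of_le f (Nat.zero_le a)]
      simp
  | succ c ih =>
      rcases le_or_gt (c + 1) a with hca | hca
      · rw [descProd_of_le _ hca, ascProd_of_le f hca]
        simp
      · have hac : a ≤ c := by omega
        rw [descProd_succ_top _ hac, ascProd_succ_top f hac, ih, mul_inv_rev]

theorem conj_pow_shift (A : G) (g : ℕ → G) (a : ℕ) :
    ∀ t : ℕ, (∀ j, a ≤ j → j < a + t → A * g j = g (j + 1) * A) →
      g (a + t) * A ^ t = A ^ t * g a := by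
  intro t
  induction t with
  | zero => simp
  | succ c ih =>
      intro h
      have h1 : g (a + c + 1) * A = A * g (a + c) := (h (a + c) (by omega) (by omega)).symm
      calc g (a + (c + 1)) * A ^ (c + 1) = (g (a + c + 1) * A) * A ^ c := by
            rw [pow_succ']; rw [← mul_assoc]; rfl
        _ = A * (g (a + c) * A ^ c) := by rw [h1, mul_assoc]
        _ = A * (A ^ c * g a) := by rw [ih (fun j hj1 hj2 => h j hj1 (by omega))]
        _ = A ^ (c + 1) * g a := by rw [pow_succ', mul_assoc]

theorem pow_mul_shift (A : G) (g : ℕ → G) :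
    ∀ m a : ℕ, (∀ j, a ≤ j → j < a + m → A * g j = g (j + 1) * A) →
      (A * g (a + m)) ^ (m + 1) = A ^ (m + 1) * ascProd g a (a + m + 1) := by
  intro m
  induction m with
  | zero =>
      intro a _
      simp [ascProd_one]
  | succ c ih =>
      intro a h
      have ih' := ih (a + 1) (fun j hj1 hj2 => h j (by omega) (by omega))
      rw [show a + 1 + c = a + (c + 1) by omega] at ih'
      have hcp : g (a + (c + 1)) * A ^ (c + 1) = A ^ (c + 1) * g a :=
        conj_pow_shift A g a (c + 1) h
      calc (A * g (a + (c + 1))) ^ (c + 1 + 1)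
          = (A * g (a + (c + 1))) * (A * g (a + (c + 1))) ^ (c + 1) := by rw [pow_succ']
        _ = A * (g (a + (c + 1)) * (A ^ (c + 1) * ascProd g (a + 1) (a + (c + 1) + 1))) := by
            rw [ih', mul_assoc]
        _ = A * ((g (a + (c + 1)) * A ^ (c + 1)) * ascProd g (a + 1) (a + (c + 1) + 1)) := by
            rw [mul_assoc]
        _ = A * ((A ^ (c + 1) * g a) * ascProd g (a + 1) (a + (c + 1) + 1)) := by rw [hcp]
        _ = (A * A ^ (c + 1)) * (g a * ascProd g (a + 1) (a + (c + 1) + 1)) := by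
            group
        _ = A ^ (c + 1 + 1) * ascProd g a (a + (c + 1) + 1) := by
            rw [← ascProd_succ_bot g (by omega), ← pow_succ']



section Braid

variable {G : Type*} [Group G] {n : ℕ} {s : ℕ → G} {ω : G}

/-- `ω σ_{n-1}⋯σ_k` conjugates `σ_j` to `σ_{j+1}` for `1 ≤ j ≤ k-2`. -/
theorem A_conj (hf : ∀ i j : ℕ, 1 ≤ j → j + 2 ≤ i → i < n → s i * s j = s j * s i)
    (hw : ∀ j : ℕ, ω * s j = s (j + 1) * ω)
    {k j : ℕ} (hj : 1 ≤ j) (hjk : j + 2 ≤ k) (hk : k ≤ n) :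
    (ω * descProd s k n) * s j = s (j + 1) * (ω * descProd s k n) := by
  have hcomm : Commute (s j) (descProd s k n) :=
    commute_descProd (fun i hi1 hi2 =>
      (show Commute (s i) (s j) from hf i j hj (by omega) hi2).symm)
  calc ω * descProd s k n * s j = ω * (s j * descProd s k n) := by
        rw [mul_assoc, ← hcomm.eq]
    _ = (ω * s j) * descProd s k n := by rw [mul_assoc]
    _ = s (j + 1) * (ω * descProd s k n) := by rw [hw j, mul_assoc]

/-- Part 1: `y_1 ⋯ y_k = (ω σ_{n-1}⋯σ_k)^k`. -/
theorem part1 (hf : ∀ i j : ℕ, 1 ≤ j → j + 2 ≤ i → i < n → s i * s j = s j * s i)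
    (hw : ∀ j : ℕ, ω * s j = s (j + 1) * ω) :
    ∀ k : ℕ, 1 ≤ k → k ≤ n →
      ((List.range k).map fun j => yy n s ω (j + 1)).prod = (ω * descProd s k n) ^ k := by
  intro k
  induction k with
  | zero => omega
  | succ c ih =>
      intro _ hkn
      rcases Nat.eq_zero_or_pos c with rfl | hc
      · rw [show List.range 1 = [0] from rfl]
        simp [yy, descProd_of_le (fun j => (s j)⁻¹) (le_refl 1)]
      · have hcn : c ≤ n := by omega
        rw [List.range_succ, List.map_append, List.prod_append, ih hc hcn]
        simp only [List.map_cons, List.map_nil, List.prod_cons, List.prod_nil, mul_one]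
        -- goal: (ω * descProd s c n)^c * yy n s ω (c+1) = (ω * descProd s (c+1) n)^(c+1)
        set A := ω * descProd s (c + 1) n with hA
        have hAc : ω * descProd s c n = A * s c := by
          rw [hA, descProd_succ_bot s (show c < n by omega), ← mul_assoc]
        have hpow : (A * s c) ^ c = A ^ c * ascProd s 1 (c + 1) := by
          have hps := pow_mul_shift A s (c - 1) 1 (fun j hj1 hj2 => by
            exact A_conj hf hw hj1 (by omega) hkn)
          rw [show 1 + (c - 1) = c by omega, show c - 1 + 1 = c by omega] at hps
          exact hps
        have hy : yy n s ω (c + 1) = (ascProd s 1 (c + 1))⁻¹ * A := by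
          unfold yy
          rw [inv_descProd, mul_assoc]
        rw [hAc, hpow, hy]
        calc A ^ c * ascProd s 1 (c + 1) * ((ascProd s 1 (c + 1))⁻¹ * A) = A ^ c * A := by
              group
          _ = A ^ (c + 1) := by rw [← pow_succ]

/-- The key braid-word lemma: `P_{a,b} P_{a,b+1} = P_{a,b+1} P_{a+1,b+1}` where
`P_{a,b} = σ_{b-1}⋯σ_a`. -/
theorem Dlem (hb : ∀ j : ℕ, s j * s (j + 1) * s j = s (j + 1) * s j * s (j + 1))
    (hf : ∀ i j : ℕ, 1 ≤ j → j + 2 ≤ i → i < n → s i * s j = s j * s i) :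
    ∀ b a : ℕ, 1 ≤ a → b < n →
      descProd s a b * descProd s a (b + 1) =
        descProd s a (b + 1) * descProd s (a + 1) (b + 1) := by
  intro b
  induction b with
  | zero =>
      intro a ha _
      rw [descProd_of_le s (show 0 ≤ a by omega), descProd_of_le s (show 1 ≤ a by omega),
        descProd_of_le s (show 1 ≤ a + 1 by omega)]
  | succ c ih =>
      intro a ha hcn
      rcases le_or_gt (c + 1) a with hca | hca
      · rw [descProd_of_le s hca, descProd_of_le s (show c + 2 ≤ a + 1 by omega)]
        rw [one_mul, mul_one]
      · have hac : a ≤ c := by omega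
        have e1 : descProd s a (c + 2) = s (c + 1) * descProd s a (c + 1) :=
          descProd_succ_top s (by omega)
        have e2 : descProd s a (c + 1) = s c * descProd s a c := descProd_succ_top s hac
        have e3 : descProd s (a + 1) (c + 2) = s (c + 1) * descProd s (a + 1) (c + 1) :=
          descProd_succ_top s (by omega)
        have c1 : s (c + 1) * descProd s a c = descProd s a c * s (c + 1) :=
          (commute_descProd (fun j hj1 hj2 =>
            show Commute (s (c + 1)) (s j) from hf (c + 1) j (by omega) (by omega) hcn)).eq
        have ihh : descProd s a c * descProd s a (c + 1) =
            descProd s a (c + 1) * descProd s (a + 1) (c + 1) := ih a ha (by omega)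
        set X := descProd s a c
        set V := descProd s (a + 1) (c + 1)
        rw [e1, e3, e2] at *
        -- goal : s c * X * (s (c+1) * (s c * X)) = s (c+1) * (s c * X) * (s (c+1) * V)
        calc s c * X * (s (c + 1) * (s c * X))
            = s c * (X * s (c + 1)) * (s c * X) := by group
          _ = s c * (s (c + 1) * X) * (s c * X) := by rw [← c1]
          _ = (s c * s (c + 1)) * (X * (s c * X)) := by group
          _ = (s c * s (c + 1)) * ((s c * X) * V) := by rw [ihh]
          _ = (s c * s (c + 1) * s c) * (X * V) := by group
          _ = (s (c + 1) * s c * s (c + 1)) * (X * V) := by rw [hb c]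
          _ = (s (c + 1) * s c) * ((s (c + 1) * X) * V) := by group
          _ = (s (c + 1) * s c) * ((X * s (c + 1)) * V) := by rw [c1]
          _ = s (c + 1) * (s c * X) * (s (c + 1) * V) := by group

end Braid



section Braid2

variable {G : Type*} [Group G] {n : ℕ} {s : ℕ → G} {ω : G}

theorem prodRangeSucc (f : ℕ → G) (t : ℕ) :
    ((List.range (t + 1)).map f).prod = ((List.range t).map f).prod * f t := by
  rw [List.range_succ, List.map_append, List.prod_append]
  simp

/-- The key commutation: `(ω σ_{n-1}⋯σ_m)` commutes with `y_{m+1}`. -/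
theorem commA (hb : ∀ j : ℕ, s j * s (j + 1) * s j = s (j + 1) * s j * s (j + 1))
    (hf : ∀ i j : ℕ, 1 ≤ j → j + 2 ≤ i → i < n → s i * s j = s j * s i)
    (hw : ∀ j : ℕ, ω * s j = s (j + 1) * ω)
    (hper : ∀ j : ℕ, s (j + n) = s j)
    {m : ℕ} (hm : 1 ≤ m) (hmn : m + 1 ≤ n) :
    (ω * descProd s m n) * yy n s ω (m + 1) = yy n s ω (m + 1) * (ω * descProd s m n) := by
  have hg : ∀ j : ℕ, ω * (s j)⁻¹ = (s (j + 1))⁻¹ * ω := by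
    intro j
    have h := congrArg (fun x => (s (j + 1))⁻¹ * x * (s j)⁻¹) (hw j)
    simpa [mul_assoc] using h.symm
  unfold yy
  set g : ℕ → G := fun j => (s j)⁻¹ with hgdef
  have h1 : descProd s m n = descProd s (m + 1) n * s m := descProd_succ_bot s (by omega)
  have h2 : descProd g 1 (m + 1) = (s m)⁻¹ * descProd g 1 m := descProd_succ_top g hm
  have h3 : descProd s (m + 1) n * descProd g 1 m = descProd g 1 m * descProd s (m + 1) n := by
    have hcom : Commute (descProd g 1 m) (descProd s (m + 1) n) :=
      commute_descProd (fun i hi1 hi2 =>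
        ((commute_descProd (x := s i) (f := g) (fun j hj1 hj2 =>
          (show Commute (s i) (s j) from hf i j hj1 (by omega) hi2).inv_right))).symm)
    exact hcom.symm.eq
  have h4 : ω * descProd g 1 m = descProd g 2 (m + 1) * ω := mul_descProd_shift ω g hg 1 m
  have h5 : ω * descProd s m (n - 1) = descProd s (m + 1) n * ω := by
    have h := mul_descProd_shift ω s hw m (n - 1)
    rwa [show n - 1 + 1 = n by omega] at h
  have h6 : descProd g 1 (m + 1) = descProd g 2 (m + 1) * (s 1)⁻¹ := by
    have h := descProd_succ_bot g (show 1 < m + 1 by omega)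
    rwa [show (1 : ℕ) + 1 = 2 from rfl] at h
  have h7 : (ω * ω) * s (n - 1) = s 1 * (ω * ω) := by
    have e3 : s (n + 1) = s 1 := by
      have h := hper 1
      rwa [show 1 + n = n + 1 by omega] at h
    calc ω * ω * s (n - 1) = ω * (ω * s (n - 1)) := by rw [mul_assoc]
      _ = ω * (s (n - 1 + 1) * ω) := by rw [hw]
      _ = (ω * s n) * ω := by rw [show n - 1 + 1 = n by omega, mul_assoc]
      _ = (s (n + 1) * ω) * ω := by rw [hw]
      _ = s 1 * (ω * ω) := by rw [e3, mul_assoc]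
  have h7' : (s 1)⁻¹ * (ω * ω) = (ω * ω) * (s (n - 1))⁻¹ := by
    have h := congrArg (fun x => (s 1)⁻¹ * x * (s (n - 1))⁻¹) h7
    simpa [mul_assoc] using h
  have h8 : descProd s m (n - 1) * descProd s m n = descProd s m n * descProd s (m + 1) n := by
    have h := Dlem hb hf (n - 1) m hm (by omega)
    rwa [show n - 1 + 1 = n by omega] at h
  have h9 : s (n - 1) * descProd s m (n - 1) = descProd s m n := by
    have h := descProd_succ_top s (show m ≤ n - 1 by omega)
    rw [show n - 1 + 1 = n by omega] at h
    exact h.symm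
  have L : (ω * descProd s m n) * (descProd g 1 (m + 1) * ω * descProd s (m + 1) n) =
      descProd g 2 (m + 1) * ((ω * ω) * (descProd s m (n - 1) * descProd s (m + 1) n)) := by
    calc (ω * descProd s m n) * (descProd g 1 (m + 1) * ω * descProd s (m + 1) n)
        = (ω * (descProd s (m + 1) n * s m)) *
            (((s m)⁻¹ * descProd g 1 m) * ω * descProd s (m + 1) n) := by rw [← h1, ← h2]
      _ = ω * ((descProd s (m + 1) n * descProd g 1 m) * (ω * descProd s (m + 1) n)) := by
            group
      _ = ω * ((descProd g 1 m * descProd s (m + 1) n) * (ω * descProd s (m + 1) n)) := by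
            rw [h3]
      _ = (ω * descProd g 1 m) * ((descProd s (m + 1) n * ω) * descProd s (m + 1) n) := by
            group
      _ = (ω * descProd g 1 m) * ((ω * descProd s m (n - 1)) * descProd s (m + 1) n) := by
            rw [h5]
      _ = (descProd g 2 (m + 1) * ω) * ((ω * descProd s m (n - 1)) * descProd s (m + 1) n) := by
            rw [h4]
      _ = descProd g 2 (m + 1) * ((ω * ω) * (descProd s m (n - 1) * descProd s (m + 1) n)) := by
            group
  have R : (descProd g 1 (m + 1) * ω * descProd s (m + 1) n) * (ω * descProd s m n) =
      descProd g 2 (m + 1) * ((ω * ω) * (descProd s m (n - 1) * descProd s (m + 1) n)) := by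
    calc (descProd g 1 (m + 1) * ω * descProd s (m + 1) n) * (ω * descProd s m n)
        = ((descProd g 2 (m + 1) * (s 1)⁻¹) * ω * descProd s (m + 1) n) *
            (ω * descProd s m n) := by rw [← h6]
      _ = descProd g 2 (m + 1) * (((s 1)⁻¹ * ω) *
            ((descProd s (m + 1) n * ω) * descProd s m n)) := by group
      _ = descProd g 2 (m + 1) * (((s 1)⁻¹ * ω) *
            ((ω * descProd s m (n - 1)) * descProd s m n)) := by rw [h5]
      _ = descProd g 2 (m + 1) * (((s 1)⁻¹ * (ω * ω)) *
            (descProd s m (n - 1) * descProd s m n)) := by group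
      _ = descProd g 2 (m + 1) * (((ω * ω) * (s (n - 1))⁻¹) *
            (descProd s m (n - 1) * descProd s m n)) := by rw [h7']
      _ = descProd g 2 (m + 1) * ((ω * ω) * ((s (n - 1))⁻¹ *
            (descProd s m (n - 1) * descProd s m n))) := by group
      _ = descProd g 2 (m + 1) * ((ω * ω) * ((s (n - 1))⁻¹ *
            (descProd s m n * descProd s (m + 1) n))) := by rw [h8]
      _ = descProd g 2 (m + 1) * ((ω * ω) * ((s (n - 1))⁻¹ *
            ((s (n - 1) * descProd s m (n - 1)) * descProd s (m + 1) n))) := by rw [← h9]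
      _ = descProd g 2 (m + 1) * ((ω * ω) * (descProd s m (n - 1) * descProd s (m + 1) n)) := by
            group
  exact L.trans R.symm

theorem omega_pow_shift (hw : ∀ j : ℕ, ω * s j = s (j + 1) * ω) :
    ∀ (t j : ℕ), ω ^ t * s j = s (j + t) * ω ^ t := by
  intro t
  induction t with
  | zero => simp
  | succ c ih =>
      intro j
      calc ω ^ (c + 1) * s j = ω * (ω ^ c * s j) := by rw [pow_succ', mul_assoc]
        _ = ω * (s (j + c) * ω ^ c) := by rw [ih]
        _ = (ω * s (j + c)) * ω ^ c := by rw [mul_assoc]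
        _ = s (j + c + 1) * (ω * ω ^ c) := by rw [hw, mul_assoc]
        _ = s (j + (c + 1)) * ω ^ (c + 1) := by
              rw [← pow_succ', show j + (c + 1) = j + c + 1 from rfl]

theorem omega_pow_central (hw : ∀ j : ℕ, ω * s j = s (j + 1) * ω)
    (hper : ∀ j : ℕ, s (j + n) = s j) (j : ℕ) : ω ^ n * s j = s j * ω ^ n := by
  rw [omega_pow_shift hw n j, hper j]

theorem commute_pow_yy (hw : ∀ j : ℕ, ω * s j = s (j + 1) * ω)
    (hper : ∀ j : ℕ, s (j + n) = s j) (i : ℕ) : Commute (ω ^ n) (yy n s ω i) := by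
  have hc : ∀ j, Commute (ω ^ n) (s j) := fun j => omega_pow_central hw hper j
  unfold yy
  exact ((commute_descProd (fun j _ _ => (hc j).inv_right)).mul_right
    ((Commute.refl ω).pow_left n)).mul_right (commute_descProd (fun j _ _ => hc j))

/-- Part 2 core: telescoping for the truncated products. -/
theorem part2aux (hb : ∀ j : ℕ, s j * s (j + 1) * s j = s (j + 1) * s j * s (j + 1))
    (hf : ∀ i j : ℕ, 1 ≤ j → j + 2 ≤ i → i < n → s i * s j = s j * s i)
    (hw : ∀ j : ℕ, ω * s j = s (j + 1) * ω)
    (hper : ∀ j : ℕ, s (j + n) = s j)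
    (d : ℕ → ℕ) (hd : ∀ k : ℕ, 1 ≤ k → k < n → d (k + 1) ≤ d k) :
    ∀ m : ℕ, m + 1 ≤ n →
      ((List.range (m + 1)).map fun j => yy n s ω (j + 1) ^ d (j + 1)).prod =
        ((List.range m).map fun k =>
          (((List.range (k + 1)).map fun j => yy n s ω (j + 1)).prod) ^
            (d (k + 1) - d (k + 2))).prod *
        (((List.range (m + 1)).map fun j => yy n s ω (j + 1)).prod) ^ d (m + 1) := by
  intro m
  induction m with
  | zero => intro _; simp [List.range_succ]
  | succ c ih =>
      intro hc2n
      have ihh := ih (by omega)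
      rw [prodRangeSucc (fun j => yy n s ω (j + 1) ^ d (j + 1)) (c + 1), ihh]
      rw [prodRangeSucc (fun k =>
        (((List.range (k + 1)).map fun j => yy n s ω (j + 1)).prod) ^
          (d (k + 1) - d (k + 2))) c]
      have hY : ((List.range (c + 1)).map fun j => yy n s ω (j + 1)).prod * yy n s ω (c + 2) =
          ((List.range (c + 2)).map fun j => yy n s ω (j + 1)).prod := by
        rw [prodRangeSucc (fun j => yy n s ω (j + 1)) (c + 1)]
      have hcom : Commute (((List.range (c + 1)).map fun j => yy n s ω (j + 1)).prod)
          (yy n s ω (c + 2)) := by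
        rw [part1 hf hw (c + 1) (by omega) (by omega)]
        exact (show Commute (ω * descProd s (c + 1) n) (yy n s ω (c + 2)) from
          commA hb hf hw hper (by omega) hc2n).pow_left (c + 1)
      have hdle : d (c + 2) ≤ d (c + 1) := hd (c + 1) (by omega) (by omega)
      have key : (((List.range (c + 1)).map fun j => yy n s ω (j + 1)).prod) ^ d (c + 1) *
          yy n s ω (c + 2) ^ d (c + 2) =
          (((List.range (c + 1)).map fun j => yy n s ω (j + 1)).prod) ^
            (d (c + 1) - d (c + 2)) *
          (((List.range (c + 2)).map fun j => yy n s ω (j + 1)).prod) ^ d (c + 2) := by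
        have e : d (c + 1) = (d (c + 1) - d (c + 2)) + d (c + 2) := by omega
        calc (((List.range (c + 1)).map fun j => yy n s ω (j + 1)).prod) ^ d (c + 1) *
            yy n s ω (c + 2) ^ d (c + 2)
            = (((List.range (c + 1)).map fun j => yy n s ω (j + 1)).prod) ^
                ((d (c + 1) - d (c + 2)) + d (c + 2)) * yy n s ω (c + 2) ^ d (c + 2) := by
              rw [← e]
          _ = (((List.range (c + 1)).map fun j => yy n s ω (j + 1)).prod) ^
                (d (c + 1) - d (c + 2)) *
              ((((List.range (c + 1)).map fun j => yy n s ω (j + 1)).prod) ^ d (c + 2) *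
                yy n s ω (c + 2) ^ d (c + 2)) := by rw [pow_add, mul_assoc]
          _ = (((List.range (c + 1)).map fun j => yy n s ω (j + 1)).prod) ^
                (d (c + 1) - d (c + 2)) *
              ((((List.range (c + 1)).map fun j => yy n s ω (j + 1)).prod *
                yy n s ω (c + 2)) ^ d (c + 2)) := by rw [hcom.mul_pow]
          _ = (((List.range (c + 1)).map fun j => yy n s ω (j + 1)).prod) ^
                (d (c + 1) - d (c + 2)) *
              (((List.range (c + 2)).map fun j => yy n s ω (j + 1)).prod) ^ d (c + 2) := by
              rw [hY]
      rw [mul_assoc, key, mul_assoc]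

end Braid2


end Stmt2Aux

theorem Stmt2Aux.castne {n a b : ℕ} (ha : a < n) (hb : b < n) (h : a ≠ b) :
    (a : ZMod n) ≠ (b : ZMod n) := by
  intro hab
  have h2 := (ZMod.natCast_eq_natCast_iff a b n).mp hab
  rw [Nat.ModEq, Nat.mod_eq_of_lt ha, Nat.mod_eq_of_lt hb] at h2
  exact h h2

/-- In `ABr_n`: `y_1 ⋯ y_k = (ω σ_{n-1} ⋯ σ_k)^k` for `1 ≤ k ≤ n`; consequently, for a
weakly decreasing vector `d`, the translation `y_1^{d_1} ⋯ y_n^{d_n}` equals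
`(y_1⋯y_n)^{d_n} ∏_{k=1}^{n-1} (y_1⋯y_k)^{d_k - d_{k+1}}`, a product of the positive
elements `(ω σ_{n-1}⋯σ_k)^k`, i.e. a positive braid lift of an affine permutation. -/
theorem stmt2 {G : Type*} [Group G] (n : ℕ) (σ : ZMod n → G) (ω : G)
    (hbraid : ∀ i : ZMod n, σ i * σ (i + 1) * σ i = σ (i + 1) * σ i * σ (i + 1))
    (hfar : ∀ i j : ZMod n, i ≠ j → i ≠ j + 1 → j ≠ i + 1 → σ i * σ j = σ j * σ i)
    (hω : ∀ i : ZMod n, ω * σ i * ω⁻¹ = σ (i + 1)) :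
    (∀ k : ℕ, 1 ≤ k → k ≤ n →
      ((List.range k).map fun j => yElt n σ ω (j + 1)).prod = (posPiece n σ ω k) ^ k) ∧
    (∀ d : ℕ → ℕ, (∀ k : ℕ, 1 ≤ k → k < n → d (k + 1) ≤ d k) →
      ((List.range n).map fun j => yElt n σ ω (j + 1) ^ d (j + 1)).prod =
        ((posPiece n σ ω n) ^ n) ^ d n *
          ((List.range (n - 1)).map fun k =>
            ((posPiece n σ ω (k + 1)) ^ (k + 1)) ^ (d (k + 1) - d (k + 2))).prod) := by
  have hb : ∀ j : ℕ, σ ((j : ℕ) : ZMod n) * σ ((j + 1 : ℕ) : ZMod n) * σ ((j : ℕ) : ZMod n) =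
      σ ((j + 1 : ℕ) : ZMod n) * σ ((j : ℕ) : ZMod n) * σ ((j + 1 : ℕ) : ZMod n) := by
    intro j
    have e : ((j + 1 : ℕ) : ZMod n) = (j : ZMod n) + 1 := by push_cast; ring
    rw [e]
    exact hbraid _
  have hw : ∀ j : ℕ, ω * σ ((j : ℕ) : ZMod n) = σ ((j + 1 : ℕ) : ZMod n) * ω := by
    intro j
    have e : ((j + 1 : ℕ) : ZMod n) = (j : ZMod n) + 1 := by push_cast; ring
    rw [e, ← hω (j : ZMod n)]
    group
  have hper : ∀ j : ℕ, σ ((j + n : ℕ) : ZMod n) = σ ((j : ℕ) : ZMod n) := by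
    intro j
    congr 1
    push_cast
    simp
  have hf : ∀ i j : ℕ, 1 ≤ j → j + 2 ≤ i → i < n →
      σ ((i : ℕ) : ZMod n) * σ ((j : ℕ) : ZMod n) =
        σ ((j : ℕ) : ZMod n) * σ ((i : ℕ) : ZMod n) := by
    intro i j hj hji hi
    apply hfar
    · exact Stmt2Aux.castne hi (by omega) (by omega)
    · have e : (j : ZMod n) + 1 = ((j + 1 : ℕ) : ZMod n) := by push_cast; ring
      rw [e]
      exact Stmt2Aux.castne hi (by omega) (by omega)
    · rcases Nat.lt_or_ge (i + 1) n with h' | h'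
      · have e : (i : ZMod n) + 1 = ((i + 1 : ℕ) : ZMod n) := by push_cast; ring
        rw [e]
        exact Stmt2Aux.castne (by omega) h' (by omega)
      · have hi1 : i + 1 = n := by omega
        have e : (i : ZMod n) + 1 = ((0 : ℕ) : ZMod n) := by
          have e2 : ((i + 1 : ℕ) : ZMod n) = (i : ZMod n) + 1 := by push_cast; ring
          rw [← e2, hi1]
          simp
        rw [e]
        exact Stmt2Aux.castne (by omega) (by omega) (by omega)
  have hyy : ∀ i : ℕ, yElt n σ ω i = Stmt2Aux.yy n (fun j => σ ((j : ℕ) : ZMod n)) ω i :=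
    fun _ => rfl
  constructor
  · intro k hk1 hkn
    simp only [hyy]
    exact Stmt2Aux.part1 hf hw k hk1 hkn
  · intro d hd
    rcases Nat.eq_zero_or_pos n with rfl | hn
    · simp
    · have H := Stmt2Aux.part2aux hb hf hw hper d hd (n - 1) (by omega)
      rw [show n - 1 + 1 = n by omega] at H
      simp only [hyy]
      rw [H]
      have hYn : ((List.range n).map fun j =>
          Stmt2Aux.yy n (fun j => σ ((j : ℕ) : ZMod n)) ω (j + 1)).prod =
          (posPiece n σ ω n) ^ n :=
        Stmt2Aux.part1 hf hw n hn (le_refl n)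
      have hE : ((List.range (n - 1)).map fun k =>
          (((List.range (k + 1)).map fun j =>
            Stmt2Aux.yy n (fun j => σ ((j : ℕ) : ZMod n)) ω (j + 1)).prod) ^
              (d (k + 1) - d (k + 2))).prod =
          ((List.range (n - 1)).map fun k =>
            ((posPiece n σ ω (k + 1)) ^ (k + 1)) ^ (d (k + 1) - d (k + 2))).prod := by
        congr 1
        apply List.map_congr_left
        intro k hk
        simp only [List.mem_range] at hk
        rw [Stmt2Aux.part1 hf hw (k + 1) (by omega) (by omega)]
        rfl
      rw [hE, hYn]
      have hωn : posPiece n σ ω n = ω := by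
        show ω * descProd (fun j => σ ((j : ℕ) : ZMod n)) n n = ω
        rw [Stmt2Aux.descProd_of_le _ (le_refl n), mul_one]
      rw [hωn]
      have hcent : ∀ x ∈ (List.range (n - 1)).map (fun k =>
          ((posPiece n σ ω (k + 1)) ^ (k + 1)) ^ (d (k + 1) - d (k + 2))),
          Commute (ω ^ n) x := by
        intro x hx
        simp only [List.mem_map] at hx
        obtain ⟨k, _, rfl⟩ := hx
        have h1 : Commute (ω ^ n) (posPiece n σ ω (k + 1)) := by
          show Commute (ω ^ n) (ω * descProd (fun j => σ ((j : ℕ) : ZMod n)) (k + 1) n)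
          exact ((Commute.refl ω).pow_left n).mul_right
            (Stmt2Aux.commute_descProd (fun j _ _ =>
              Stmt2Aux.omega_pow_central hw hper j))
        exact (h1.pow_right _).pow_right _
      have hC : Commute ((ω ^ n) ^ d n)
          (((List.range (n - 1)).map fun k =>
            ((posPiece n σ ω (k + 1)) ^ (k + 1)) ^ (d (k + 1) - d (k + 2))).prod) :=
        (Commute.list_prod_right _ _ hcent).pow_left _
      exact hC.symm.eq
end

section
/- In the extended affine symmetric group S̃_n, two elements of the form y^d·c and y^{d'}·c, where c = s_1 s_2 ⋯ s_{n-1} is the image of the Coxeter element and d, d' ∈ ℤ^n, are conjugate in S̃_n if and only if d_1 + ⋯ + d_n = d'_1 + ⋯ + d'_n. -/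
/-- An `n`-periodic permutation of `ℤ`: a bijection `v` with `v (m + n) = v m + n`. -/
def IsPeriodicPerm (n : ℕ) (v : Equiv.Perm ℤ) : Prop :=
  ∀ m : ℤ, v (m + n) = v m + n

/-!
The displacement `∑_{i<n} (v i - i)` is additive on periodic permutations, because a periodic
permutation permutes the residues modulo `n`; hence it is a conjugacy invariant, and on `y^d c`
it equals `n (d_1 + ⋯ + d_n)`. Conversely, since `c` shifts residues by one, conjugating `y^d c`
by `y^A` replaces `d_i` by `d_i + A_i - A_{i-1}` (indices mod `n`). Taking the partial sums
`A_k = ∑_{j ≤ k} (d'_j - d_j)`, which satisfy `A_0 = A_n = 0` when the sums of `d` and `d'` agree,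
turns `d` into `d'`.
-/

open Finset Function

theorem Function.Periodic.map_emod {α : Type*} {f : ℤ → α} {n : ℤ} (hf : Periodic f n)
    (m : ℤ) : f (m % n) = f m := by
  conv_rhs => rw [← Int.emod_add_mul_ediv m n, mul_comm]
  exact (hf.int_mul (m / n) (m % n)).symm

theorem Function.Periodic.eq_of_forall_lt {α : Type*} {f g : ℤ → α} {n : ℕ} (hn : 0 < n)
    (hf : Periodic f n) (hg : Periodic g n) (h : ∀ i < n, f i = g i) (m : ℤ) : f m = g m := by
  have h0 : 0 ≤ m % n := Int.emod_nonneg m (by omega)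
  have hlt : m % n < n := Int.emod_lt_of_pos m (by omega)
  rw [← hf.map_emod, ← hg.map_emod, ← Int.toNat_of_nonneg h0]
  exact h _ (by omega)

theorem periodic_ite_dvd_sub {α : Type*} [Zero α] (n i : ℤ) (x : α) :
    Periodic (fun m : ℤ => if n ∣ m - i then x else 0) n := by
  intro m
  simp only [add_sub_right_comm, dvd_add_self_right]

theorem Equiv.Perm.zpow_apply_eq_add_mul {y : Equiv.Perm ℤ} {b : ℤ → ℤ}
    (hy : ∀ m, y m = m + b m) (hb : ∀ m, b (y m) = b m) (t m : ℤ) :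
    (y ^ t) m = m + t * b m := by
  have hb' : ∀ m, b (y⁻¹ m) = b m := fun m => by simpa using (hb (y⁻¹ m)).symm
  have hinv : ∀ m, y⁻¹ m = m - b m := fun m => by
    rw [eq_sub_iff_add_eq, ← hb' m, ← hy]
    simp
  induction t using Int.induction_on generalizing m with
  | zero => simp
  | succ k ih => rw [zpow_add_one, Equiv.Perm.mul_apply, ih, hb, hy]; ring
  | pred k ih => rw [zpow_sub_one, Equiv.Perm.mul_apply, ih, hb', hinv]; ring

namespace IsPeriodicPerm

variable {n : ℕ} {v w : Equiv.Perm ℤ}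

theorem mul (hv : IsPeriodicPerm n v) (hw : IsPeriodicPerm n w) : IsPeriodicPerm n (v * w) :=
  fun m => by simp only [Equiv.Perm.mul_apply, hw m, hv (w m)]

theorem inv (hv : IsPeriodicPerm n v) : IsPeriodicPerm n v⁻¹ :=
  fun m => by rw [Equiv.Perm.inv_eq_iff_eq, hv]; simp

theorem of_apply_eq {a : ℤ → ℤ} (ha : Periodic a n) (hv : ∀ m, v m = m + n * a m) :
    IsPeriodicPerm n v :=
  fun m => by rw [hv, hv, ha]; ring

theorem periodic_emod (hv : IsPeriodicPerm n v) : Periodic (fun m => v m % n) n :=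
  fun m => by simp only [hv m, Int.add_emod_right]

theorem periodic_sub (hv : IsPeriodicPerm n v) : Periodic (fun m => v m - m) n :=
  fun m => by simp only [hv m]; ring

theorem apply_add_mul (hv : IsPeriodicPerm n v) (m k : ℤ) : v (m + n * k) = v m + n * k := by
  have h := hv.periodic_sub.int_mul k m
  simp only [Int.cast_id] at h
  rw [mul_comm]
  linarith

theorem apply_emod_emod (hv : IsPeriodicPerm n v) (m : ℤ) : v (m % n) % n = v m % n :=
  hv.periodic_emod.map_emod m

/-- `w` induces a permutation of the residues modulo `n`. -/
theorem sum_range_comp {M : Type*} [AddCommMonoid M] (hw : IsPeriodicPerm n w) {h : ℤ → M}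
    (hh : Periodic h n) : ∑ i ∈ range n, h (w i) = ∑ i ∈ range n, h i := by
  rcases Nat.eq_zero_or_pos n with rfl | hn
  · simp
  have emod_nonneg : ∀ m : ℤ, 0 ≤ m % n := fun m => Int.emod_nonneg m (by omega)
  have emod_lt : ∀ m : ℤ, m % n < n := fun m => Int.emod_lt_of_pos m (by omega)
  have toNat_emod : ∀ m : ℤ, ((m % n).toNat : ℤ) = m % n := fun m =>
    Int.toNat_of_nonneg (emod_nonneg m)
  refine sum_nbij' (fun i => (w i % n).toNat) (fun j => (w⁻¹ j % n).toNat) ?_ ?_ ?_ ?_ ?_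
  · intro i _
    have := emod_lt (w i)
    rw [mem_range]; omega
  · intro j _
    have := emod_lt (w⁻¹ j)
    rw [mem_range]; omega
  · intro i hi
    rw [mem_range] at hi
    simp only [toNat_emod, hw.inv.apply_emod_emod]
    simp [Int.emod_eq_of_lt (by omega : (0 : ℤ) ≤ i) (by omega : (i : ℤ) < n)]
  · intro j hj
    rw [mem_range] at hj
    simp only [toNat_emod, hw.apply_emod_emod]
    simp [Int.emod_eq_of_lt (by omega : (0 : ℤ) ≤ j) (by omega : (j : ℤ) < n)]
  · intro i _
    simp only [toNat_emod, hh.map_emod]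

theorem sum_range_add_one {M : Type*} [AddCommMonoid M] {h : ℤ → M} (hh : Periodic h n) :
    ∑ i ∈ range n, h (i + 1) = ∑ i ∈ range n, h i :=
  IsPeriodicPerm.sum_range_comp (w := Equiv.addRight 1) (fun m => by simp [add_right_comm]) hh

end IsPeriodicPerm

section Displacement

variable {n : ℕ} {v w g : Equiv.Perm ℤ}

def displacement (n : ℕ) (v : Equiv.Perm ℤ) : ℤ := ∑ i ∈ range n, (v i - i)

theorem displacement_one : displacement n 1 = 0 := by simp [displacement]

theorem displacement_mul (hv : IsPeriodicPerm n v) (hw : IsPeriodicPerm n w) :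
    displacement n (v * w) = displacement n v + displacement n w := by
  have h := hw.sum_range_comp hv.periodic_sub
  simp only [displacement, Equiv.Perm.mul_apply, ← h, ← sum_add_distrib]
  exact sum_congr rfl fun i _ => by ring

theorem displacement_conj (hg : IsPeriodicPerm n g) (hv : IsPeriodicPerm n v) :
    displacement n (g * v * g⁻¹) = displacement n v := by
  have h := displacement_mul hg hg.inv
  rw [mul_inv_cancel, displacement_one] at h
  rw [displacement_mul (hg.mul hv) hg.inv, displacement_mul hg hv]
  linarith

theorem displacement_of_apply_eq {a : ℤ → ℤ} (hv : ∀ m, v m = m + n * a m) :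
    displacement n v = n * ∑ i ∈ range n, a i := by
  simp [displacement, hv, mul_sum]

end Displacement

section ResidueWeight

variable {n : ℕ} {e : ℕ → ℤ}

/-- `residueWeight n e m = e r`, where `r ∈ {1, …, n}` is the residue of `m` modulo `n`
(and `0` if `n = 0`). -/
def residueWeight (n : ℕ) (e : ℕ → ℤ) (m : ℤ) : ℤ :=
  ∑ j ∈ range n, if (n : ℤ) ∣ m - ((j + 1 : ℕ) : ℤ) then e (j + 1) else 0

theorem residueWeight_periodic : Periodic (residueWeight n e) n :=
  fun m => sum_congr rfl fun _ _ => periodic_ite_dvd_sub _ _ _ m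

theorem residueWeight_add_mul (m k : ℤ) : residueWeight n e (m + n * k) = residueWeight n e m := by
  rw [mul_comm]; exact residueWeight_periodic.int_mul k m

theorem residueWeight_natCast {i : ℕ} (h1 : 1 ≤ i) (h2 : i ≤ n) : residueWeight n e i = e i := by
  rw [residueWeight, sum_eq_single (i - 1)]
  · rw [if_pos (by rw [Nat.sub_add_cancel h1]; simp), Nat.sub_add_cancel h1]
  · intro j hj hne
    rw [mem_range] at hj
    rw [if_neg]
    intro h
    have := Int.eq_zero_of_abs_lt_dvd h (abs_lt.2 ⟨by omega, by omega⟩)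
    omega
  · intro h
    rw [mem_range] at h
    omega

theorem residueWeight_zero (hn : 0 < n) : residueWeight n e 0 = e n := by
  rw [← residueWeight_periodic.eq, residueWeight_natCast hn le_rfl]

/-- The partial sums `A k` satisfy `A 0 = A n = 0`, so `A (r - 1)` is well defined for residues
`r ∈ {1, …, n}`, and `A r - A (r - 1) = e' r - e r`. -/
theorem residueWeight_partialSum_add_one (hn : 0 < n) {e' : ℕ → ℤ}
    (hsum : ∑ j ∈ range n, e (j + 1) = ∑ j ∈ range n, e' (j + 1)) (m : ℤ) :
    residueWeight n (fun k => ∑ j ∈ range k, (e' (j + 1) - e (j + 1))) (m + 1) +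
        residueWeight n e (m + 1) =
      residueWeight n (fun k => ∑ j ∈ range k, (e' (j + 1) - e (j + 1))) m +
        residueWeight n e' (m + 1) := by
  set A : ℕ → ℤ := fun k => ∑ j ∈ range k, (e' (j + 1) - e (j + 1)) with hA
  refine Periodic.eq_of_forall_lt hn
    (((residueWeight_periodic.add_const 1).add (residueWeight_periodic.add_const 1)))
    (residueWeight_periodic.add (residueWeight_periodic.add_const 1)) (fun i hi => ?_) m
  have hcast : ((i : ℤ) + 1) = ((i + 1 : ℕ) : ℤ) := by push_cast; ring
  have hAi : residueWeight n A i = A i := by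
    rcases Nat.eq_zero_or_pos i with rfl | hi0
    · simp [residueWeight_zero hn, hA, sum_sub_distrib, hsum]
    · exact residueWeight_natCast hi0 hi.le
  simp only [Pi.add_apply, hcast, residueWeight_natCast (Nat.le_add_left 1 i) hi, hAi]
  simp only [hA, sum_range_succ]
  ring

end ResidueWeight

theorem Equiv.Perm.zpow_apply_of_apply_eq_ite {y : Equiv.Perm ℤ} {n i : ℤ}
    (hy : ∀ m, y m = if n ∣ m - i then m + n else m) (t m : ℤ) :
    (y ^ t) m = m + n * if n ∣ m - i then t else 0 := by
  rw [Equiv.Perm.zpow_apply_eq_add_mul (b := fun m => if n ∣ m - i then n else 0)]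
  · split_ifs <;> ring
  · intro m
    rw [hy]
    split_ifs <;> simp
  · intro m
    by_cases h : n ∣ m - i
    · rw [hy, if_pos h]
      exact periodic_ite_dvd_sub n i n m
    · rw [hy, if_neg h]

section ProdZpow

variable {n : ℕ} {y : ℕ → Equiv.Perm ℤ}
  (hy : ∀ i : ℕ, 1 ≤ i → i ≤ n → ∀ m : ℤ,
    y i m = if (n : ℤ) ∣ (m - (i : ℤ)) then m + n else m)
include hy

theorem prod_zpow_apply (e : ℕ → ℤ) {k : ℕ} (hk : k ≤ n) (m : ℤ) :
    ((List.range k).map fun j => y (j + 1) ^ e (j + 1)).prod m =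
      m + n * ∑ j ∈ range k, if (n : ℤ) ∣ m - ((j + 1 : ℕ) : ℤ) then e (j + 1) else 0 := by
  induction k generalizing m with
  | zero => simp
  | succ k ih =>
    rw [List.range_succ, List.map_append, List.map_singleton, List.prod_append,
      List.prod_singleton, Equiv.Perm.mul_apply,
      Equiv.Perm.zpow_apply_of_apply_eq_ite (hy (k + 1) (by omega) (by omega)), ih (by omega),
      sum_range_succ]
    simp only [add_sub_right_comm m, dvd_add_left (dvd_mul_right _ _)]
    ring

theorem prod_zpow_apply_eq_residueWeight (e : ℕ → ℤ) (m : ℤ) :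
    ((List.range n).map fun j => y (j + 1) ^ e (j + 1)).prod m = m + n * residueWeight n e m :=
  prod_zpow_apply hy e le_rfl m

theorem isPeriodicPerm_prod_zpow (e : ℕ → ℤ) :
    IsPeriodicPerm n ((List.range n).map fun j => y (j + 1) ^ e (j + 1)).prod :=
  .of_apply_eq residueWeight_periodic (prod_zpow_apply_eq_residueWeight hy e)

theorem displacement_prod_zpow (e : ℕ → ℤ) :
    displacement n ((List.range n).map fun j => y (j + 1) ^ e (j + 1)).prod =
      n * ∑ i ∈ range n, e (i + 1) := by
  rw [displacement_of_apply_eq (prod_zpow_apply_eq_residueWeight hy e),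
    ← IsPeriodicPerm.sum_range_add_one residueWeight_periodic]
  refine congrArg _ (sum_congr rfl fun i hi => ?_)
  rw [mem_range] at hi
  exact_mod_cast residueWeight_natCast (Nat.le_add_left 1 i) hi

end ProdZpow

/-- In `S̃_n`, the elements `y^d c` and `y^{d'} c`, with `c = s_1 ⋯ s_{n-1}` the image of
the Coxeter element, are conjugate if and only if `d_1 + ⋯ + d_n = d'_1 + ⋯ + d'_n`. -/
theorem stmt6 (n : ℕ) (hn : 0 < n)
    (y : ℕ → Equiv.Perm ℤ)
    (hy : ∀ i : ℕ, 1 ≤ i → i ≤ n → ∀ m : ℤ,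
      y i m = if (n : ℤ) ∣ (m - (i : ℤ)) then m + n else m)
    (c : Equiv.Perm ℤ)
    (hc : ∀ m : ℤ, c m = if (n : ℤ) ∣ m then m + 1 - n else m + 1)
    (d d' : ℕ → ℤ) :
    (∃ g : Equiv.Perm ℤ, IsPeriodicPerm n g ∧
        g * (((List.range n).map fun j => y (j + 1) ^ d (j + 1)).prod * c) * g⁻¹ =
          ((List.range n).map fun j => y (j + 1) ^ d' (j + 1)).prod * c) ↔
      ∑ i ∈ Finset.range n, d (i + 1) = ∑ i ∈ Finset.range n, d' (i + 1) := by
  have hc_eq : ∀ m, c m = m + 1 + n * if (n : ℤ) ∣ m then -1 else 0 := fun m => by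
    rw [hc]; split_ifs <;> ring
  have hc_per : IsPeriodicPerm n c := fun m => by
    simp only [hc_eq, dvd_add_self_right]; ring
  constructor
  · rintro ⟨g, hg, hconj⟩
    have h := displacement_conj hg ((isPeriodicPerm_prod_zpow hy d).mul hc_per)
    rw [hconj, displacement_mul (isPeriodicPerm_prod_zpow hy d') hc_per,
      displacement_mul (isPeriodicPerm_prod_zpow hy d) hc_per, displacement_prod_zpow hy,
      displacement_prod_zpow hy, add_left_inj] at h
    exact (mul_left_cancel₀ (by exact_mod_cast hn.ne') h).symm
  · intro hsum
    have key := residueWeight_partialSum_add_one hn hsum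
    generalize (fun k => ∑ j ∈ range k, (d' (j + 1) - d (j + 1))) = A at key
    refine ⟨_, isPeriodicPerm_prod_zpow hy A, ?_⟩
    rw [mul_inv_eq_iff_eq_mul]
    ext m
    have hW : ∀ e, residueWeight n e (c m) = residueWeight n e (m + 1) := fun e => by
      rw [hc_eq, residueWeight_add_mul]
    simp only [Equiv.Perm.mul_apply, prod_zpow_apply_eq_residueWeight hy, hc_per.apply_add_mul,
      residueWeight_add_mul, hW]
    linear_combination (n : ℤ) * key m
end

section
/- Let m, n be coprime integers with n ≥ 1, and for 1 ≤ i ≤ n write m·i = q_i·n + r_i with 0 ≤ r_i ≤ n-1. Then in the extended affine symmetric group S̃_n, the element π^m (where π^m(x) = x+m) is conjugate to y_1^{q_1} y_2^{q_2-q_1} ⋯ y_n^{q_n - q_{n-1}} · s_1 s_2 ⋯ s_{n-1}; hence π^m is conjugate to y^d·s_1⋯s_{n-1} for any d ∈ ℤ^n with d_1+⋯+d_n = m. -/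
namespace Stmt8Aux


/-- Periodicity passes to inverses. -/
lemma inv_per (nz : ℤ) (g : Equiv.Perm ℤ) (h : ∀ x, g (x + nz) = g x + nz) (x : ℤ) :
    g⁻¹ (x + nz) = g⁻¹ x + nz := by
  apply g.injective
  rw [show g (g⁻¹ (x + nz)) = x + nz from g.apply_symm_apply _, h, show g (g⁻¹ x) = x from g.apply_symm_apply _]

/-- Periodicity passes to zpowers. -/
lemma zpow_per (nz : ℤ) (g : Equiv.Perm ℤ) (h : ∀ x, g (x + nz) = g x + nz) (j : ℤ) (x : ℤ) :
    (g ^ j) (x + nz) = (g ^ j) x + nz := by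
  induction j using Int.induction_on generalizing x with
  | zero => simp
  | succ k ih =>
      rw [zpow_add_one, Equiv.Perm.mul_apply, Equiv.Perm.mul_apply, h, ih]
  | pred k ih =>
      rw [zpow_sub_one, Equiv.Perm.mul_apply, Equiv.Perm.mul_apply, inv_per nz g h, ih]

/-- Periodicity for multiples of the period. -/
lemma per_mul (nz : ℤ) (g : Equiv.Perm ℤ) (h : ∀ x, g (x + nz) = g x + nz) (k : ℤ) (x : ℤ) :
    g (x + nz * k) = g x + nz * k := by
  induction k using Int.induction_on generalizing x with
  | zero => simp
  | succ k ih =>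
      have : x + nz * (k + 1) = (x + nz * k) + nz := by ring
      rw [this, h, ih]; ring
  | pred k ih =>
      have h' : ∀ z, g (z - nz) = g z - nz := by
        intro z
        have := h (z - nz); rw [sub_add_cancel] at this; omega
      have : x + nz * (-k - 1) = (x + nz * (-k)) - nz := by ring
      rw [this, h', ih]; ring

/-- If `g` shifts by `1` mod `nz`, then `g^j` shifts by `j` mod `nz`. -/
lemma zpow_mod (nz : ℤ) (g : Equiv.Perm ℤ) (h : ∀ x, nz ∣ g x - (x + 1)) (j : ℤ) (x : ℤ) :
    nz ∣ (g ^ j) x - (x + j) := by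
  have hinv : ∀ x, nz ∣ g⁻¹ x - (x - 1) := by
    intro x
    have h1 := h (g⁻¹ x)
    rw [show g (g⁻¹ x) = x from g.apply_symm_apply x] at h1
    have h2 : g⁻¹ x - (x - 1) = -(x - (g⁻¹ x + 1)) := by ring
    rw [h2]
    exact dvd_neg.mpr h1
  induction j using Int.induction_on generalizing x with
  | zero => simpa using dvd_refl 0
  | succ k ih =>
      rw [zpow_add_one, Equiv.Perm.mul_apply]
      have h1 := ih (g x)
      have h2 := h x
      have h3 : (g ^ (k:ℤ)) (g x) - (x + (k + 1)) =
          ((g ^ (k:ℤ)) (g x) - (g x + k)) + (g x - (x + 1)) := by ring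
      rw [h3]
      exact dvd_add h1 h2
  | pred k ih =>
      rw [zpow_sub_one, Equiv.Perm.mul_apply]
      have h1 := ih (g⁻¹ x)
      have h2 := hinv x
      have h3 : (g ^ (-k:ℤ)) (g⁻¹ x) - (x + (-k - 1)) =
          ((g ^ (-k:ℤ)) (g⁻¹ x) - (g⁻¹ x + (-k))) + (g⁻¹ x - (x - 1)) := by ring
      rw [h3]
      exact dvd_add h1 h2



/-- Formula for zpowers of the "add `nz` on one residue class" permutation. -/
lemma ypow (nz i : ℤ) (Y : Equiv.Perm ℤ)
    (hY : ∀ x, Y x = if nz ∣ (x - i) then x + nz else x) (k : ℤ) (x : ℤ) :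
    (Y ^ k) x = if nz ∣ (x - i) then x + nz * k else x := by
  have hYinv : ∀ x, Y⁻¹ x = if nz ∣ (x - i) then x - nz else x := by
    intro x
    apply Y.injective
    rw [show Y (Y⁻¹ x) = x from Y.apply_symm_apply x]
    by_cases hd : nz ∣ x - i
    · have hd2 : nz ∣ (x - nz) - i := by
        have h3 : (x - nz) - i = (x - i) + nz * (-1) := by ring
        rw [h3]; exact dvd_add hd ⟨-1, rfl⟩
      rw [if_pos hd, hY, if_pos hd2]; ring
    · rw [if_neg hd, hY, if_neg hd]
  induction k using Int.induction_on generalizing x with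
  | zero => simp
  | succ k ih =>
      rw [zpow_add_one, Equiv.Perm.mul_apply, hY]
      by_cases hd : nz ∣ x - i
      · have hd2 : nz ∣ (x + nz) - i := by
          have h3 : (x + nz) - i = (x - i) + nz * 1 := by ring
          rw [h3]; exact dvd_add hd ⟨1, rfl⟩
        rw [if_pos hd, ih, if_pos hd2, if_pos hd]; ring
      · rw [if_neg hd, ih, if_neg hd, if_neg hd]
  | pred k ih =>
      rw [zpow_sub_one, Equiv.Perm.mul_apply, hYinv]
      by_cases hd : nz ∣ x - i
      · have hd2 : nz ∣ (x - nz) - i := by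
          have h3 : (x - nz) - i = (x - i) + nz * (-1) := by ring
          rw [h3]; exact dvd_add hd ⟨-1, rfl⟩
        rw [if_pos hd, ih, if_pos hd2, if_pos hd]; ring
      · rw [if_neg hd, ih, if_neg hd, if_neg hd]

/-- The representative in `[1, n]` of the residue class of `x` mod `n`. -/
def rres (n : ℕ) (x : ℤ) : ℕ := ((x - 1) % (n : ℤ)).toNat + 1

lemma rres_pos (n : ℕ) (x : ℤ) : 1 ≤ rres n x := Nat.le_add_left 1 _

lemma rres_cast (n : ℕ) (hn : 0 < n) (x : ℤ) : (rres n x : ℤ) = (x - 1) % n + 1 := by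
  have h2 : 0 ≤ (x - 1) % (n : ℤ) := Int.emod_nonneg _ (by exact_mod_cast hn.ne')
  simp [rres, Int.toNat_of_nonneg h2]

lemma rres_le (n : ℕ) (hn : 0 < n) (x : ℤ) : rres n x ≤ n := by
  have h1 : (x - 1) % (n : ℤ) < n := Int.emod_lt_of_pos _ (by exact_mod_cast hn)
  have h2 : 0 ≤ (x - 1) % (n : ℤ) := Int.emod_nonneg _ (by exact_mod_cast hn.ne')
  have := rres_cast n hn x
  omega

lemma rres_dvd (n : ℕ) (hn : 0 < n) (x : ℤ) : (n : ℤ) ∣ x - rres n x := by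
  rw [rres_cast n hn]
  have h := Int.mul_ediv_add_emod (x - 1) n
  exact ⟨(x - 1) / n, by omega⟩

lemma rres_add (n : ℕ) (hn : 0 < n) (x k : ℤ) : rres n (x + n * k) = rres n x := by
  unfold rres
  have h3 : x + (n : ℤ) * k - 1 = (x - 1) + (n : ℤ) * k := by ring
  rw [h3, Int.add_mul_emod_self_left]

lemma rres_eq_iff (n : ℕ) (hn : 0 < n) (x : ℤ) (i : ℕ) (h1 : 1 ≤ i) (h2 : i ≤ n) :
    (n : ℤ) ∣ x - i ↔ i = rres n x := by
  constructor
  · intro hd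
    have hd2 := rres_dvd n hn x
    have hd3 : (n : ℤ) ∣ ((rres n x : ℤ) - i) := by
      have h3 : (rres n x : ℤ) - i = (x - i) - (x - rres n x) := by ring
      rw [h3]; exact dvd_sub hd hd2
    have hb1 := rres_pos n x
    have hb2 := rres_le n hn x
    have h0 : ((rres n x : ℤ) - i) = 0 := by
      refine Int.eq_zero_of_abs_lt_dvd hd3 ?_
      rw [abs_lt]
      constructor <;> [skip; skip] <;> push_cast <;> omega
    omega
  · rintro rfl
    exact rres_dvd n hn x

lemma rres_self (n : ℕ) (hn : 0 < n) (i : ℕ) (h1 : 1 ≤ i) (h2 : i ≤ n) : rres n (i : ℤ) = i :=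
  ((rres_eq_iff n hn (i : ℤ) i h1 h2).mp (by simp)).symm

lemma emod_eq_of_dvd_sub (nz a j : ℤ) (h : nz ∣ a - j) (h0 : 0 ≤ j) (h1 : j < nz) :
    a % nz = j := by
  obtain ⟨t, ht⟩ := h
  have h3 : a = j + nz * t := by omega
  rw [h3, Int.add_mul_emod_self_left, Int.emod_eq_of_lt h0 h1]


lemma key (n : ℕ) (hn : 0 < n) (m : ℤ) (hcop : Int.gcd m n = 1)
    (y : ℕ → Equiv.Perm ℤ)
    (hy : ∀ i : ℕ, 1 ≤ i → i ≤ n → ∀ m' : ℤ,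
      y i m' = if (n : ℤ) ∣ (m' - (i : ℤ)) then m' + n else m')
    (c : Equiv.Perm ℤ)
    (hc : ∀ m' : ℤ, c m' = if (n : ℤ) ∣ m' then m' + 1 - n else m' + 1)
    (d : ℕ → ℤ) (hd : ∑ i ∈ Finset.range n, d (i + 1) = m) :
    ∃ g : Equiv.Perm ℤ, IsPeriodicPerm n g ∧
      g * (Equiv.addRight (1 : ℤ)) ^ m * g⁻¹ =
        ((List.range n).map fun j => y (j + 1) ^ d (j + 1)).prod * c := by
  have hnz : ((n : ℤ)) ≠ 0 := by exact_mod_cast hn.ne'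
  have hnpos : (0 : ℤ) < n := by exact_mod_cast hn
  -- zpow formula for the y's
  have hyz : ∀ i : ℕ, 1 ≤ i → i ≤ n → ∀ (k : ℤ) (x : ℤ),
      ((y i) ^ k) x = if (n : ℤ) ∣ (x - (i : ℤ)) then x + (n : ℤ) * k else x :=
    fun i h1 h2 => ypow (n : ℤ) (i : ℤ) (y i) (hy i h1 h2)
  -- formula for partial products
  have hYprod : ∀ L, L ≤ n → ∀ x : ℤ,
      (((List.range L).map fun j => y (j + 1) ^ d (j + 1)).prod) x =
        if rres n x ≤ L then x + (n : ℤ) * d (rres n x) else x := by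
    intro L
    induction L with
    | zero =>
        intro _ x
        have := rres_pos n x
        rw [if_neg (by omega)]
        simp
    | succ L ih =>
        intro hL x
        rw [List.range_succ, List.map_append, List.prod_append]
        simp only [List.map_cons, List.map_nil, List.prod_cons, List.prod_nil, mul_one]
        rw [Equiv.Perm.mul_apply, hyz (L + 1) (by omega) (by omega)]
        by_cases he : rres n x = L + 1
        · rw [if_pos ((rres_eq_iff n hn x (L + 1) (by omega) (by omega)).mpr he.symm)]
          rw [ih (by omega), if_neg (by rw [rres_add n hn]; omega), if_pos (by omega), he]
        · rw [if_neg (fun hdd => he ((rres_eq_iff n hn x (L + 1) (by omega) (by omega)).mp hdd).symm)]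
          rw [ih (by omega)]
          have := rres_pos n x
          by_cases h2 : rres n x ≤ L
          · rw [if_pos h2, if_pos (by omega)]
          · rw [if_neg h2, if_neg (by omega)]
  set w : Equiv.Perm ℤ := ((List.range n).map fun j => y (j + 1) ^ d (j + 1)).prod * c with hwdef
  have hwx : ∀ x, w x = c x + (n : ℤ) * d (rres n (c x)) := by
    intro x
    rw [hwdef, Equiv.Perm.mul_apply, hYprod n le_rfl, if_pos (rres_le n hn _)]
  have hcper : ∀ x, c (x + (n : ℤ)) = c x + (n : ℤ) := by
    intro x
    have h2 : ((n : ℤ) ∣ x + n) ↔ ((n : ℤ) ∣ x) := by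
      rw [add_comm]; exact dvd_add_right dvd_rfl
    rw [hc, hc]
    by_cases hdvd : (n : ℤ) ∣ x
    · rw [if_pos (h2.mpr hdvd), if_pos hdvd]; ring
    · rw [if_neg (fun hh => hdvd (h2.mp hh)), if_neg hdvd]; ring
  have hwper : ∀ x, w (x + (n : ℤ)) = w x + (n : ℤ) := by
    intro x
    rw [hwx, hwx, hcper]
    rw [show c x + (n : ℤ) = c x + (n : ℤ) * 1 by ring, rres_add n hn]
    ring
  have hwmod : ∀ x, (n : ℤ) ∣ w x - (x + 1) := by
    intro x
    rw [hwx, hc]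
    by_cases hdvd : (n : ℤ) ∣ x
    · rw [if_pos hdvd]; exact ⟨d (rres n (x + 1 - n)) - 1, by ring⟩
    · rw [if_neg hdvd]; exact ⟨d (rres n (x + 1)), by ring⟩
  have hwtr : ∀ (k x : ℤ), w (x + (n : ℤ) * k) = w x + (n : ℤ) * k := per_mul (n : ℤ) w hwper
  have hwzmod : ∀ (j x : ℤ), (n : ℤ) ∣ (w ^ j) x - (x + j) := zpow_mod (n : ℤ) w hwmod
  have hwj : ∀ j : ℤ, (n : ℤ) ∣ (w ^ j) 0 - j := by
    intro j; simpa using hwzmod j 0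
  -- the value of w^n at 0
  have hrres1 : rres n 1 = 1 := by
    have := rres_self n hn 1 le_rfl hn
    simpa using this
  have hstep : ∀ k : ℕ, 1 ≤ k → k ≤ n →
      (w ^ k) 0 = (k : ℤ) - n + (n : ℤ) * (∑ i ∈ Finset.range k, d (i + 1)) := by
    intro k hk1
    induction k, hk1 using Nat.le_induction with
    | base =>
        intro _
        rw [pow_one, hwx, hc, if_pos (dvd_zero _)]
        rw [show (0 : ℤ) + 1 - n = 1 + (n : ℤ) * (-1) by ring, rres_add n hn, hrres1]
        simp [Finset.sum_range_one]
        ring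
    | succ k hk ih =>
        intro hk1n
        have ihv := ih (by omega)
        rw [pow_succ', Equiv.Perm.mul_apply, ihv, hwx, hc]
        set S := ∑ i ∈ Finset.range k, d (i + 1) with hS
        have hnd : ¬ (n : ℤ) ∣ ((k : ℤ) - n + (n : ℤ) * S) := by
          intro hdvd
          have h4 : (n : ℤ) ∣ (k : ℤ) := by
            have h5 : (k : ℤ) = ((k : ℤ) - n + (n : ℤ) * S) + (n : ℤ) * (1 - S) := by ring
            rw [h5]; exact dvd_add hdvd ⟨1 - S, rfl⟩
          have h6 := Int.le_of_dvd (by exact_mod_cast hk) h4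
          omega
        rw [if_neg hnd]
        rw [show (k : ℤ) - n + (n : ℤ) * S + 1 = ((k : ℤ) + 1) + (n : ℤ) * (S - 1) by ring,
          rres_add n hn]
        have h8 : rres n ((k : ℤ) + 1) = k + 1 := by
          have h9 := rres_self n hn (k + 1) (by omega) hk1n
          rw [show ((k : ℤ) + 1) = (((k + 1 : ℕ)) : ℤ) by push_cast; ring]
          exact h9
        rw [h8, Finset.sum_range_succ]
        push_cast
        ring
  have hwn : ((w ^ n) : Equiv.Perm ℤ) 0 = (n : ℤ) * m := by
    rw [hstep n hn le_rfl, hd]; ring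
  -- Bezout coefficient
  obtain ⟨u, hu⟩ : ∃ u : ℤ, (n : ℤ) ∣ m * u - 1 := by
    have hb := Int.gcd_eq_gcd_ab m (n : ℤ)
    rw [hcop] at hb
    push_cast at hb
    exact ⟨Int.gcdA m n, ⟨-Int.gcdB m n, by linear_combination -hb⟩⟩
  obtain ⟨v, hv⟩ := hu
  -- the conjugating permutation
  set jf : ℤ → ℤ := fun x => (x * u) % (n : ℤ) with hjfdef
  have hj0 : ∀ x, 0 ≤ jf x := fun x => Int.emod_nonneg _ hnz
  have hjlt : ∀ x, jf x < (n : ℤ) := fun x => Int.emod_lt_of_pos _ hnpos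
  have hjdvd : ∀ x, (n : ℤ) ∣ x * u - jf x := fun x =>
    ⟨x * u / n, by linarith [Int.mul_ediv_add_emod (x * u) (n : ℤ)]⟩
  have hjm : ∀ x, (n : ℤ) ∣ x - jf x * m := by
    intro x
    obtain ⟨t, ht⟩ := hjdvd x
    exact ⟨t * m - x * v, by linear_combination m * ht - x * hv⟩
  have hq : ∀ x, (n : ℤ) * ((x - jf x * m) / n) = x - jf x * m := fun x =>
    Int.mul_ediv_cancel' (hjm x)
  set gfun : ℤ → ℤ := fun x => (w ^ (jf x)) 0 + (x - jf x * m) / n * n with hgfundef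
  set hfun : ℤ → ℤ := fun x => (x - (w ^ (x % (n : ℤ))) 0) / n * n + (x % (n : ℤ)) * m
    with hhfundef
  have hgval : ∀ x, gfun x = (w ^ (jf x)) 0 + (x - jf x * m) / n * n := fun _ => rfl
  have hgmod : ∀ x, gfun x % (n : ℤ) = jf x := by
    intro x
    apply emod_eq_of_dvd_sub (n : ℤ) _ _ _ (hj0 x) (hjlt x)
    obtain ⟨t, ht⟩ := hwj (jf x)
    exact ⟨t + (x - jf x * m) / n, by rw [hgval]; linear_combination ht⟩
  have hhdvd : ∀ x : ℤ, (n : ℤ) ∣ x - (w ^ (x % (n : ℤ))) 0 := by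
    intro x
    obtain ⟨t, ht⟩ := hwj (x % (n : ℤ))
    have h2 : (n : ℤ) ∣ x - x % (n : ℤ) := ⟨x / n, by linarith [Int.mul_ediv_add_emod x (n : ℤ)]⟩
    obtain ⟨s, hs⟩ := h2
    exact ⟨s - t, by linear_combination hs - ht⟩
  have hleft : ∀ x, hfun (gfun x) = x := by
    intro x
    show (gfun x - (w ^ (gfun x % (n : ℤ))) 0) / n * n + (gfun x % (n : ℤ)) * m = x
    rw [hgmod x]
    rw [show gfun x - (w ^ jf x) 0 = (x - jf x * m) / n * n by rw [hgval x]; ring]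
    rw [Int.mul_ediv_cancel _ hnz]
    have := hq x
    linarith
  have hright : ∀ x, gfun (hfun x) = x := by
    intro x
    have hj'0 : 0 ≤ x % (n : ℤ) := Int.emod_nonneg _ hnz
    have hj'lt : x % (n : ℤ) < (n : ℤ) := Int.emod_lt_of_pos _ hnpos
    have han : (n : ℤ) * ((x - (w ^ (x % (n : ℤ))) 0) / n) = x - (w ^ (x % (n : ℤ))) 0 :=
      Int.mul_ediv_cancel' (hhdvd x)
    have hval : hfun x = (x - (w ^ (x % (n : ℤ))) 0) / n * n + (x % (n : ℤ)) * m := rfl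
    have hjh : jf (hfun x) = x % (n : ℤ) := by
      show (hfun x * u) % (n : ℤ) = x % (n : ℤ)
      apply emod_eq_of_dvd_sub (n : ℤ) _ _ _ hj'0 hj'lt
      refine ⟨(x - (w ^ (x % (n : ℤ))) 0) / n * u + (x % (n : ℤ)) * v, ?_⟩
      rw [hval]
      linear_combination (x % (n : ℤ)) * hv + u * han - u * han
    rw [hgval (hfun x), hjh]
    rw [show hfun x - (x % (n : ℤ)) * m = (x - (w ^ (x % (n : ℤ))) 0) / n * n by rw [hval]; ring]
    rw [Int.mul_ediv_cancel _ hnz]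
    linarith [han]
  set g : Equiv.Perm ℤ := ⟨gfun, hfun, hleft, hright⟩ with hgdef
  have hgapp : ∀ z, g z = gfun z := fun _ => rfl
  have hper : IsPeriodicPerm n g := by
    intro x
    show gfun (x + (n : ℤ)) = gfun x + (n : ℤ)
    have hj2 : jf (x + (n : ℤ)) = jf x := by
      show ((x + (n : ℤ)) * u) % (n : ℤ) = (x * u) % (n : ℤ)
      rw [show (x + (n : ℤ)) * u = x * u + (n : ℤ) * u by ring, Int.add_mul_emod_self_left]
    rw [hgval (x + (n : ℤ)), hgval x, hj2]
    rw [show x + (n : ℤ) - jf x * m = (x - jf x * m) + 1 * (n : ℤ) by ring,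
      Int.add_mul_ediv_right _ _ hnz]
    ring
  have hkey : ∀ x, gfun (x + m) = w (gfun x) := by
    intro x
    have hj2 : jf (x + m) = (jf x + 1) % (n : ℤ) := by
      show ((x + m) * u) % (n : ℤ) = (jf x + 1) % (n : ℤ)
      have hdd : (n : ℤ) ∣ (x + m) * u - (jf x + 1) := by
        obtain ⟨t, ht⟩ := hjdvd x
        exact ⟨t + v, by linear_combination ht + hv⟩
      rw [Int.emod_eq_emod_iff_emod_sub_eq_zero]
      exact Int.emod_eq_zero_of_dvd hdd
    have h6 : ∀ j : ℤ, (w ^ (j + 1)) 0 = w ((w ^ j) 0) := by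
      intro j
      rw [add_comm, zpow_add, zpow_one, Equiv.Perm.mul_apply]
    by_cases hcase : jf x + 1 < (n : ℤ)
    · have hj3 : jf (x + m) = jf x + 1 := by
        rw [hj2, Int.emod_eq_of_lt (by linarith [hj0 x]) hcase]
      rw [hgval (x + m), hgval x, hj3]
      rw [show x + m - (jf x + 1) * m = x - jf x * m by ring]
      rw [show (x - jf x * m) / n * (n : ℤ) = (n : ℤ) * ((x - jf x * m) / n) from mul_comm _ _]
      rw [hwtr ((x - jf x * m) / n) ((w ^ jf x) 0), h6]
    · have hjeq : jf x + 1 = (n : ℤ) := by have := hjlt x; omega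
      have hj3 : jf (x + m) = 0 := by rw [hj2, hjeq, Int.emod_self]
      rw [hgval (x + m), hgval x, hj3]
      have h7 : w ((w ^ jf x) 0) = (n : ℤ) * m := by
        rw [← h6, hjeq, zpow_natCast, hwn]
      rw [show x + m - 0 * m = (x - jf x * m) + m * (n : ℤ) by rw [← hjeq]; ring]
      rw [Int.add_mul_ediv_right _ _ hnz]
      rw [show (x - jf x * m) / n * (n : ℤ) = (n : ℤ) * ((x - jf x * m) / n) from mul_comm _ _]
      rw [hwtr ((x - jf x * m) / n) ((w ^ jf x) 0), h7]
      rw [zpow_zero]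
      simp only [Equiv.Perm.one_apply]
      ring
  refine ⟨g, hper, ?_⟩
  ext x
  rw [Equiv.Perm.mul_apply, Equiv.Perm.mul_apply]
  rw [Equiv.zsmul_addRight]
  have hz : (m • (1 : ℤ)) = m := by simp
  rw [hz]
  show gfun (g⁻¹ x + m) = w x
  rw [hkey (g⁻¹ x)]
  congr 1
  show g (g⁻¹ x) = x
  exact g.apply_symm_apply x

end Stmt8Aux


/-- For `gcd(m,n) = 1`, writing `m i = q_i n + r_i` with `0 ≤ r_i < n` (so that
`q_i = ⌊m i / n⌋`), the element `π^m` of `S̃_n` is conjugate to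
`y_1^{q_1} y_2^{q_2-q_1} ⋯ y_n^{q_n-q_{n-1}} s_1 ⋯ s_{n-1}`; hence `π^m` is conjugate to
`y^d s_1 ⋯ s_{n-1}` for any `d` with `d_1 + ⋯ + d_n = m`. -/
theorem stmt8 (n : ℕ) (hn : 0 < n) (m : ℤ) (hcop : Int.gcd m n = 1)
    (y : ℕ → Equiv.Perm ℤ)
    (hy : ∀ i : ℕ, 1 ≤ i → i ≤ n → ∀ m' : ℤ,
      y i m' = if (n : ℤ) ∣ (m' - (i : ℤ)) then m' + n else m')
    (c : Equiv.Perm ℤ)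
    (hc : ∀ m' : ℤ, c m' = if (n : ℤ) ∣ m' then m' + 1 - n else m' + 1) :
    (∃ g : Equiv.Perm ℤ, IsPeriodicPerm n g ∧
        g * (Equiv.addRight (1 : ℤ)) ^ m * g⁻¹ =
          ((List.range n).map fun j =>
            y (j + 1) ^ (Int.ediv (m * ((j : ℤ) + 1)) n - Int.ediv (m * (j : ℤ)) n)).prod * c) ∧
      (∀ d : ℕ → ℤ, ∑ i ∈ Finset.range n, d (i + 1) = m →
        ∃ g : Equiv.Perm ℤ, IsPeriodicPerm n g ∧
          g * (Equiv.addRight (1 : ℤ)) ^ m * g⁻¹ =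
            ((List.range n).map fun j => y (j + 1) ^ d (j + 1)).prod * c) := by
  have hnz : ((n : ℤ)) ≠ 0 := by exact_mod_cast hn.ne'
  constructor
  · have hsum : ∑ i ∈ Finset.range n,
        (fun i : ℕ => Int.ediv (m * (i : ℤ)) n - Int.ediv (m * ((i : ℤ) - 1)) n) (i + 1) = m := by
      have h2 := Finset.sum_range_sub (fun i : ℕ => Int.ediv (m * (i : ℤ)) n) n
      beta_reduce at h2 ⊢
      have h3 : ∀ i ∈ Finset.range n,
          Int.ediv (m * (((i + 1 : ℕ)) : ℤ)) n - Int.ediv (m * (((i + 1 : ℕ) : ℤ) - 1)) n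
            = Int.ediv (m * (((i + 1 : ℕ)) : ℤ)) n - Int.ediv (m * (i : ℤ)) n := by
        intro i _
        have h4 : (((i + 1 : ℕ) : ℤ) - 1) = (i : ℤ) := by push_cast; ring
        rw [h4]
      rw [Finset.sum_congr rfl h3, h2]
      show m * (n : ℤ) / n - m * ((0 : ℕ) : ℤ) / n = m
      rw [Int.mul_ediv_cancel m hnz]
      simp
    obtain ⟨g, h1, h2⟩ := Stmt8Aux.key n hn m hcop y hy c hc
      (fun i : ℕ => Int.ediv (m * (i : ℤ)) n - Int.ediv (m * ((i : ℤ) - 1)) n) hsum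
    refine ⟨g, h1, ?_⟩
    rw [h2]
    congr 1
    congr 1
    apply List.map_congr_left
    intro j _
    congr 1
    push_cast
    ring_nf
  · intro d hd
    exact Stmt8Aux.key n hn m hcop y hy c hc d hd
end

section
/- In the shuffle algebra S with product F * F' = Sym[ F(z_1,...,z_n)F'(z_{n+1},...,z_{n+n'})/(n!n'!) · ∏_{i ≤ n < j} ((1 - z_iq_1/z_j)(1 - z_iq_2/z_j)(1 - z_jq_1q_2/z_i))/(1 - z_i/z_j) ], the vector subspace of symmetric Laurent polynomials satisfying the wheel conditions F(x, xq_1, xq_1q_2, z_4, ..., z_n) = 0 and F(x, xq_2, xq_1q_2, z_4, ..., z_n) = 0 is closed under the shuffle product. -/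
open Finset

/-- The shuffle product of `F` (in `n` variables) and `F'` (in `n'` variables):
`Sym[ F F' / (n! n'!) ∏_{i ≤ n < j} (1 - zᵢq₁/z_j)(1 - zᵢq₂/z_j)(1 - z_jq₁q₂/zᵢ)/(1 - zᵢ/z_j) ]`,
evaluated pointwise. -/
noncomputable def shuffleMul {K : Type*} [Field K] (q1 q2 : K) (n n' : ℕ)
    (F : (Fin n → K) → K) (F' : (Fin n' → K) → K) (z : Fin (n + n') → K) : K :=
  ((n.factorial * n'.factorial : ℕ) : K)⁻¹ *
    ∑ τ : Equiv.Perm (Fin (n + n')),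
      F (fun i => z (τ (Fin.castAdd n' i))) * F' (fun j => z (τ (Fin.natAdd n j))) *
        ∏ i : Fin n, ∏ j : Fin n',
          (1 - z (τ (Fin.castAdd n' i)) * q1 / z (τ (Fin.natAdd n j))) *
            (1 - z (τ (Fin.castAdd n' i)) * q2 / z (τ (Fin.natAdd n j))) *
            (1 - z (τ (Fin.natAdd n j)) * q1 * q2 / z (τ (Fin.castAdd n' i))) /
            (1 - z (τ (Fin.castAdd n' i)) / z (τ (Fin.natAdd n j)))

/-- The wheel conditions: `F` vanishes whenever three of its arguments form the pattern
`(x, x q₁, x q₁ q₂)`, resp. `(x, x q₂, x q₁ q₂)`. -/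
def WheelCondition {K : Type*} [Field K] (q1 q2 : K) {n : ℕ} (F : (Fin n → K) → K) : Prop :=
  ∀ z : Fin n → K, ∀ i j k : Fin n, i ≠ j → i ≠ k → j ≠ k →
    ((z j = q1 * z i ∧ z k = q1 * q2 * z i) ∨ (z j = q2 * z i ∧ z k = q1 * q2 * z i)) →
      F z = 0


lemma pairKill12 {K : Type*} [Field K] (q1 q2 w v : K) (hv : v ≠ 0)
    (h : w * q1 = v ∨ w * q2 = v) :
    (1 - w * q1 / v) * (1 - w * q2 / v) * (1 - v * q1 * q2 / w) / (1 - w / v) = 0 := by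
  rcases h with h | h <;> rw [h, div_self hv] <;> simp

lemma pairKill3 {K : Type*} [Field K] (q1 q2 w v : K) (hw : w ≠ 0)
    (h : v * q1 * q2 = w) :
    (1 - w * q1 / v) * (1 - w * q2 / v) * (1 - v * q1 * q2 / w) / (1 - w / v) = 0 := by
  rw [h, div_self hw]; simp

/-- The subspace of symmetric Laurent polynomials satisfying the wheel conditions is
closed under the shuffle product. -/
theorem stmt16 {K : Type*} [Field K] (q1 q2 : K) (n n' : ℕ)
    (F : (Fin n → K) → K) (F' : (Fin n' → K) → K)
    (hFsym : ∀ (ρ : Equiv.Perm (Fin n)) (z : Fin n → K), F (z ∘ ρ) = F z)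
    (hF'sym : ∀ (ρ : Equiv.Perm (Fin n')) (z : Fin n' → K), F' (z ∘ ρ) = F' z)
    (hF : WheelCondition q1 q2 F) (hF' : WheelCondition q1 q2 F') :
    ∀ z : Fin (n + n') → K, (∀ i, z i ≠ 0) → Function.Injective z →
      ∀ i j k : Fin (n + n'), i ≠ j → i ≠ k → j ≠ k →
        ((z j = q1 * z i ∧ z k = q1 * q2 * z i) ∨
          (z j = q2 * z i ∧ z k = q1 * q2 * z i)) →
        shuffleMul q1 q2 n n' F F' z = 0 := by
  intro z hz hinj i j k hij hik hjk hpat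
  have hk2 : z i * q1 * q2 = z k := by
    rcases hpat with ⟨_, h⟩ | ⟨_, h⟩ <;> rw [h] <;> ring
  have hj2 : z i * q1 = z j ∨ z i * q2 = z j := by
    rcases hpat with ⟨h, _⟩ | ⟨h, _⟩
    · exact Or.inl (by rw [h]; ring)
    · exact Or.inr (by rw [h]; ring)
  have hjk2 : z j * q1 = z k ∨ z j * q2 = z k := by
    rcases hpat with ⟨h1, h2⟩ | ⟨h1, h2⟩
    · exact Or.inr (by rw [h1, h2]; ring)
    · exact Or.inl (by rw [h1, h2]; ring)
  unfold shuffleMul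
  refine mul_eq_zero_of_right _ (Finset.sum_eq_zero fun τ _ => ?_)
  have split : ∀ p : Fin (n + n'),
      (∃ a : Fin n, p = Fin.castAdd n' a) ∨ ∃ b : Fin n', p = Fin.natAdd n b := by
    intro p
    rcases lt_or_ge (p : ℕ) n with h | h
    · exact Or.inl ⟨⟨p, h⟩, by ext; simp⟩
    · refine Or.inr ⟨⟨(p : ℕ) - n, by have := p.isLt; omega⟩, ?_⟩
      have := p.isLt
      ext
      simp only [Fin.natAdd]
      omega
  rcases split (τ.symm i) with ⟨ai, hai⟩ | ⟨bi, hbi⟩ <;>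
    rcases split (τ.symm j) with ⟨aj, haj⟩ | ⟨bj, hbj⟩ <;>
    rcases split (τ.symm k) with ⟨ak, hak⟩ | ⟨bk, hbk⟩
  · -- A A A : wheel condition for F
    have ei : z (τ (Fin.castAdd n' ai)) = z i := by rw [← hai, Equiv.apply_symm_apply]
    have ej : z (τ (Fin.castAdd n' aj)) = z j := by rw [← haj, Equiv.apply_symm_apply]
    have ek : z (τ (Fin.castAdd n' ak)) = z k := by rw [← hak, Equiv.apply_symm_apply]
    have h0 : F (fun a => z (τ (Fin.castAdd n' a))) = 0 := by
      refine hF _ ai aj ak (fun h => hij (τ.symm.injective (by rw [hai, haj, h])))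
        (fun h => hik (τ.symm.injective (by rw [hai, hak, h])))
        (fun h => hjk (τ.symm.injective (by rw [haj, hak, h]))) ?_
      simpa only [ei, ej, ek] using hpat
    rw [h0, zero_mul, zero_mul]
  · -- A A B : kill pair (aj, bk)
    have ej : z (τ (Fin.castAdd n' aj)) = z j := by rw [← haj, Equiv.apply_symm_apply]
    have ek : z (τ (Fin.natAdd n bk)) = z k := by rw [← hbk, Equiv.apply_symm_apply]
    refine mul_eq_zero_of_right _ (Finset.prod_eq_zero (Finset.mem_univ aj)
      (Finset.prod_eq_zero (Finset.mem_univ bk) ?_))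
    rw [ej, ek]
    exact pairKill12 q1 q2 _ _ (hz k) hjk2
  · -- A B A : kill pair (ai, bj)
    have ei : z (τ (Fin.castAdd n' ai)) = z i := by rw [← hai, Equiv.apply_symm_apply]
    have ej : z (τ (Fin.natAdd n bj)) = z j := by rw [← hbj, Equiv.apply_symm_apply]
    refine mul_eq_zero_of_right _ (Finset.prod_eq_zero (Finset.mem_univ ai)
      (Finset.prod_eq_zero (Finset.mem_univ bj) ?_))
    rw [ei, ej]
    exact pairKill12 q1 q2 _ _ (hz j) hj2
  · -- A B B : kill pair (ai, bj)
    have ei : z (τ (Fin.castAdd n' ai)) = z i := by rw [← hai, Equiv.apply_symm_apply]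
    have ej : z (τ (Fin.natAdd n bj)) = z j := by rw [← hbj, Equiv.apply_symm_apply]
    refine mul_eq_zero_of_right _ (Finset.prod_eq_zero (Finset.mem_univ ai)
      (Finset.prod_eq_zero (Finset.mem_univ bj) ?_))
    rw [ei, ej]
    exact pairKill12 q1 q2 _ _ (hz j) hj2
  · -- B A A : kill pair (ak, bi)
    have ek : z (τ (Fin.castAdd n' ak)) = z k := by rw [← hak, Equiv.apply_symm_apply]
    have ei : z (τ (Fin.natAdd n bi)) = z i := by rw [← hbi, Equiv.apply_symm_apply]
    refine mul_eq_zero_of_right _ (Finset.prod_eq_zero (Finset.mem_univ ak)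
      (Finset.prod_eq_zero (Finset.mem_univ bi) ?_))
    rw [ek, ei]
    exact pairKill3 q1 q2 _ _ (hz k) hk2
  · -- B A B : kill pair (aj, bk)
    have ej : z (τ (Fin.castAdd n' aj)) = z j := by rw [← haj, Equiv.apply_symm_apply]
    have ek : z (τ (Fin.natAdd n bk)) = z k := by rw [← hbk, Equiv.apply_symm_apply]
    refine mul_eq_zero_of_right _ (Finset.prod_eq_zero (Finset.mem_univ aj)
      (Finset.prod_eq_zero (Finset.mem_univ bk) ?_))
    rw [ej, ek]
    exact pairKill12 q1 q2 _ _ (hz k) hjk2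
  · -- B B A : kill pair (ak, bi)
    have ek : z (τ (Fin.castAdd n' ak)) = z k := by rw [← hak, Equiv.apply_symm_apply]
    have ei : z (τ (Fin.natAdd n bi)) = z i := by rw [← hbi, Equiv.apply_symm_apply]
    refine mul_eq_zero_of_right _ (Finset.prod_eq_zero (Finset.mem_univ ak)
      (Finset.prod_eq_zero (Finset.mem_univ bi) ?_))
    rw [ek, ei]
    exact pairKill3 q1 q2 _ _ (hz k) hk2
  · -- B B B : wheel condition for F'
    have ei : z (τ (Fin.natAdd n bi)) = z i := by rw [← hbi, Equiv.apply_symm_apply]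
    have ej : z (τ (Fin.natAdd n bj)) = z j := by rw [← hbj, Equiv.apply_symm_apply]
    have ek : z (τ (Fin.natAdd n bk)) = z k := by rw [← hbk, Equiv.apply_symm_apply]
    have h0 : F' (fun b => z (τ (Fin.natAdd n b))) = 0 := by
      refine hF' _ bi bj bk (fun h => hij (τ.symm.injective (by rw [hbi, hbj, h])))
        (fun h => hik (τ.symm.injective (by rw [hbi, hbk, h])))
        (fun h => hjk (τ.symm.injective (by rw [hbj, hbk, h]))) ?_
      simpa only [ei, ej, ek] using hpat
    rw [h0, mul_zero, zero_mul]
end
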